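/- arXiv:1203.4794 — 12 statements merged into one kernel-verified Lean document; each statement's English description precedes it below -/
import Mathlib

section
/- For every integer n ≥ 1, the equation ∑_{k=0}^{n-1} (-1)^{n-k-1} (n!/k!) φ^k e^φ = e^{nt} + (-1)^{n-1} n! , viewed as defining φ implicitly as a function of t, has for each real t a unique solution φ(t) > 0, i.e. the function F(φ) = ∑_{k=0}^{n-1} (-1)^{n-k-1} (n!/k!) φ^k e^φ is strictly increasing on (0,∞) and maps (0,∞) bijectively onto ((-1)^{n-1} n!, ∞). -/
/-!
Write `F_n` for the sum. It satisfies `F_{n+1} = (n + 1) (x^n e^x - F_n)`, so by induction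
`F_n' = n x^{n-1} e^x`, which is positive on `(0, ∞)`; and `F_n 0 = (-1)^(n-1) n!` since only
the `k = 0` term survives. On `[1, ∞)` the derivative is at least `1`, so `F_n → ∞`, and the
intermediate value theorem gives surjectivity onto `(F_n 0, ∞)`.
-/

open Finset Real Set Filter

section

variable {α δ : Type*} [ConditionallyCompleteLinearOrder α] [TopologicalSpace α] [OrderTopology α]
  [DenselyOrdered α] [LinearOrder δ] [TopologicalSpace δ] [OrderClosedTopology δ]

theorem StrictMonoOn.bijOn_Ioi_of_tendsto_atTop {f : α → δ} {a : α}
    (hmono : StrictMonoOn f (Ici a)) (hcont : ContinuousOn f (Ici a))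
    (htop : Tendsto f atTop atTop) : BijOn f (Ioi a) (Ioi (f a)) := by
  refine ⟨fun x hx => hmono self_mem_Ici (mem_Ici_of_Ioi hx) hx,
    (hmono.mono Ioi_subset_Ici_self).injOn, fun y hy => ?_⟩
  obtain ⟨b, hyb, hab⟩ := ((htop.eventually_ge_atTop y).and (eventually_ge_atTop a)).exists
  obtain ⟨x, hx, rfl⟩ := intermediate_value_Ioc hab (hcont.mono Icc_subset_Ici_self) ⟨hy, hyb⟩
  exact ⟨x, hx.1, rfl⟩

end

noncomputable def powExpPrimitive (n : ℕ) (x : ℝ) : ℝ :=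
  ∑ k ∈ range n, (-1 : ℝ) ^ (n - k - 1) * ((n.factorial : ℝ) / (k.factorial : ℝ)) * x ^ k * exp x

theorem powExpPrimitive_succ (n : ℕ) (x : ℝ) :
    powExpPrimitive (n + 1) x = (n + 1) * (x ^ n * exp x - powExpPrimitive n x) := by
  simp only [powExpPrimitive, sum_range_succ, Nat.add_sub_cancel_left, Nat.sub_self, mul_sub,
    mul_sum]
  rw [sub_eq_neg_add, ← sum_neg_distrib]
  congr 1
  · refine sum_congr rfl fun k hk => ?_
    rw [show n + 1 - k - 1 = n - k - 1 + 1 by have := mem_range.1 hk; omega]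
    push_cast [Nat.factorial_succ]
    ring
  · push_cast [Nat.factorial_succ]
    field_simp

theorem hasDerivAt_powExpPrimitive (n : ℕ) (x : ℝ) :
    HasDerivAt (powExpPrimitive n) (n * x ^ (n - 1) * exp x) x := by
  induction n with
  | zero =>
    have : powExpPrimitive 0 = fun _ => 0 := funext fun _ => by simp [powExpPrimitive]
    simpa [this] using hasDerivAt_const x (0 : ℝ)
  | succ n ih =>
    have h := (((hasDerivAt_pow n x).mul (hasDerivAt_exp x)).sub ih).const_mul ((n : ℝ) + 1)
    rw [funext (powExpPrimitive_succ n)]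
    refine h.congr_deriv ?_
    push_cast
    ring

theorem differentiable_powExpPrimitive (n : ℕ) : Differentiable ℝ (powExpPrimitive n) :=
  fun x => (hasDerivAt_powExpPrimitive n x).differentiableAt

theorem powExpPrimitive_zero_right {n : ℕ} (hn : 1 ≤ n) :
    powExpPrimitive n 0 = (-1) ^ (n - 1) * n.factorial := by
  rw [powExpPrimitive, sum_eq_single_of_mem 0 (mem_range.2 hn)]
  · simp
  · intro k _ hk
    simp [zero_pow hk]

theorem strictMonoOn_powExpPrimitive {n : ℕ} (hn : 1 ≤ n) :
    StrictMonoOn (powExpPrimitive n) (Ici 0) := by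
  refine strictMonoOn_of_deriv_pos (convex_Ici 0)
    (differentiable_powExpPrimitive n).continuous.continuousOn fun x hx => ?_
  rw [interior_Ici, Set.mem_Ioi] at hx
  rw [(hasDerivAt_powExpPrimitive n x).deriv]
  have : (0 : ℝ) < n := by exact_mod_cast hn
  positivity

theorem tendsto_powExpPrimitive_atTop {n : ℕ} (hn : 1 ≤ n) :
    Tendsto (powExpPrimitive n) atTop atTop := by
  have hderiv (x : ℝ) (hx : 1 ≤ x) : 1 ≤ n * x ^ (n - 1) * exp x := by
    have : (1 : ℝ) ≤ n := by exact_mod_cast hn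
    calc (1 : ℝ) = 1 * 1 * 1 := by ring
      _ ≤ n * x ^ (n - 1) * exp x := by
        gcongr
        · exact one_le_pow₀ hx
        · exact one_le_exp (by linarith)
  have hgrowth (x : ℝ) (hx : 1 ≤ x) : powExpPrimitive n 1 + (x - 1) ≤ powExpPrimitive n x := by
    have := (convex_Ici (1 : ℝ)).mul_sub_le_image_sub_of_le_deriv (C := 1)
      (differentiable_powExpPrimitive n).continuous.continuousOn
      (differentiable_powExpPrimitive n).differentiableOn
      (fun y hy => ?_) 1 self_mem_Ici x hx hx
    · linarith
    · rw [(hasDerivAt_powExpPrimitive n y).deriv]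
      rw [interior_Ici] at hy
      exact hderiv y hy.out.le
  refine tendsto_atTop_mono' atTop ((eventually_ge_atTop 1).mono hgrowth) ?_
  exact tendsto_atTop_add_const_left _ _ (tendsto_atTop_add_const_right _ _ tendsto_id)

/-- For every integer `n ≥ 1`, the function
`F φ = ∑_{k=0}^{n-1} (-1)^{n-k-1} (n!/k!) φ^k e^φ` is strictly increasing on `(0,∞)`
and maps `(0,∞)` bijectively onto `((-1)^{n-1} n!, ∞)`. -/
theorem stmt_0 (n : ℕ) (hn : 1 ≤ n) (F : ℝ → ℝ)
    (hF : ∀ x : ℝ, F x =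
      ∑ k ∈ Finset.range n,
        (-1 : ℝ) ^ (n - k - 1) * ((n.factorial : ℝ) / (k.factorial : ℝ)) * x ^ k * Real.exp x) :
    StrictMonoOn F (Set.Ioi (0 : ℝ)) ∧
      Set.BijOn F (Set.Ioi (0 : ℝ)) (Set.Ioi ((-1 : ℝ) ^ (n - 1) * (n.factorial : ℝ))) := by
  obtain rfl : F = powExpPrimitive n := funext hF
  have hmono := strictMonoOn_powExpPrimitive hn
  refine ⟨hmono.mono Ioi_subset_Ici_self, ?_⟩
  rw [← powExpPrimitive_zero_right hn]
  exact hmono.bijOn_Ioi_of_tendsto_atTop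
    (differentiable_powExpPrimitive n).continuous.continuousOn (tendsto_powExpPrimitive_atTop hn)
end

section
/- Let n ≥ 1 and let φ : ℝ → (0,∞) be a solution of φ^{n-1} φ' e^φ = e^{nt} with φ(t) → 0 as t → -∞. Then lim_{t→∞} φ(t)/t = n and lim_{t→∞} φ'(t) = n. -/
/-!
With `F(x) = ∫₀ˣ s^{n-1} eˢ ds`, the equation reads `(F ∘ φ)' = e^{nt}`, and the condition at `-∞`
gives `F(φ t) = e^{nt} / n`; in particular `φ → ∞`. Hence `φ' = e^{nt} / (φ^{n-1} e^φ) =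
n F(φ) / (φ^{n-1} e^φ)`, which tends to `n` because `F(x) ~ x^{n-1} eˣ`. Finally `φ(t) / t → n`
follows from `φ' → n` by the mean value inequality.
-/

open Filter Real intervalIntegral Topology Set Asymptotics

noncomputable def expPowIntegral (m : ℕ) (x : ℝ) : ℝ := ∫ s in (0 : ℝ)..x, s ^ m * exp s

namespace expPowIntegral

variable (m : ℕ)

theorem continuous_integrand : Continuous fun s : ℝ => s ^ m * exp s := by fun_prop

theorem hasDerivAt (x : ℝ) : HasDerivAt (expPowIntegral m) (x ^ m * exp x) x :=
  integral_hasDerivAt_right ((continuous_integrand m).intervalIntegrable _ _)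
    ((continuous_integrand m).stronglyMeasurableAtFilter _ _) (continuous_integrand m).continuousAt

@[simp]
theorem zero : expPowIntegral m 0 = 0 := integral_same

theorem monotoneOn : MonotoneOn (expPowIntegral m) (Ici 0) :=
  monotoneOn_of_hasDerivWithinAt_nonneg (convex_Ici 0)
    (fun x _ => (hasDerivAt m x).continuousAt.continuousWithinAt)
    (fun x _ => (hasDerivAt m x).hasDerivWithinAt)
    fun x hx => by
      rw [interior_Ici] at hx
      exact mul_nonneg (pow_nonneg (le_of_lt hx) _) (exp_pos x).le

variable {m}

theorem le_pow_mul_exp {x : ℝ} (hx : 0 ≤ x) : expPowIntegral m x ≤ x ^ m * exp x := by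
  calc expPowIntegral m x ≤ ∫ s in (0 : ℝ)..x, x ^ m * exp s := by
        refine integral_mono_on hx ((continuous_integrand m).intervalIntegrable _ _)
          ((by fun_prop : Continuous fun s => x ^ m * exp s).intervalIntegrable _ _) fun s hs => ?_
        exact mul_le_mul_of_nonneg_right (pow_le_pow_left₀ hs.1 hs.2 m) (exp_pos s).le
    _ = x ^ m * (exp x - 1) := by rw [integral_const_mul, integral_exp, exp_zero]
    _ ≤ x ^ m * exp x := by gcongr; linarith

/-- Bernoulli's inequality `s ^ m ≥ x ^ m (1 + m (s / x - 1))` under the integral. -/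
theorem pow_mul_exp_sub_le {x : ℝ} (hx : 0 < x) :
    x ^ m * exp x * (1 - m / x) - x ^ m ≤ expPowIntegral m x := by
  set A : ℝ → ℝ := fun s => x ^ m * (1 + m * (s / x - 1) - m / x) * exp s
  have hA : ∀ s, HasDerivAt A (x ^ m * (1 + m * (s / x - 1)) * exp s) s := by
    intro s
    have := (((((hasDerivAt_id s).div_const x).sub_const 1).const_mul (m : ℝ)).const_add 1
      |>.sub_const (m / x) |>.const_mul (x ^ m)).mul (hasDerivAt_exp s)
    exact this.congr_deriv (by simp only [id]; field_simp; ring)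
  have hbernoulli : ∀ s ∈ Icc 0 x, x ^ m * (1 + m * (s / x - 1)) * exp s ≤ s ^ m * exp s := by
    intro s hs
    gcongr
    calc x ^ m * (1 + m * (s / x - 1)) ≤ x ^ m * (1 + (s / x - 1)) ^ m := by
          gcongr
          exact one_add_mul_le_pow (by linarith [div_nonneg hs.1 hx.le]) m
      _ = s ^ m := by rw [add_sub_cancel, div_pow, mul_div_cancel₀ _ (pow_pos hx m).ne']
  have hcont : Continuous fun s => x ^ m * (1 + m * (s / x - 1)) * exp s := by fun_prop
  calc x ^ m * exp x * (1 - m / x) - x ^ m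
      ≤ x ^ m * (1 - m / x) * exp x - x ^ m * (1 - m - m / x) := by
        have : 0 ≤ x ^ m * (m + m / x) := by positivity
        nlinarith
    _ = A x - A 0 := by simp only [A, div_self hx.ne', zero_div, exp_zero]; ring
    _ = ∫ s in (0 : ℝ)..x, x ^ m * (1 + m * (s / x - 1)) * exp s :=
        (integral_eq_sub_of_hasDerivAt (fun s _ => hA s) (hcont.intervalIntegrable _ _)).symm
    _ ≤ expPowIntegral m x :=
        integral_mono_on hx.le (hcont.intervalIntegrable _ _)
          ((continuous_integrand m).intervalIntegrable _ _) hbernoulli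

variable (m)

theorem tendsto_div_pow_mul_exp :
    Tendsto (fun x => expPowIntegral m x / (x ^ m * exp x)) atTop (𝓝 1) := by
  have hlower : Tendsto (fun x : ℝ => 1 - m * x⁻¹ - exp (-x)) atTop (𝓝 1) := by
    simpa using ((tendsto_inv_atTop_zero.const_mul (m : ℝ)).const_sub 1).sub
      (tendsto_exp_atBot.comp tendsto_neg_atTop_atBot)
  refine tendsto_of_tendsto_of_tendsto_of_le_of_le' hlower tendsto_const_nhds ?_ ?_
  all_goals filter_upwards [eventually_gt_atTop 0] with x hx
  · rw [le_div_iff₀ (by positivity)]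
    refine (le_of_eq ?_).trans (pow_mul_exp_sub_le hx)
    rw [exp_neg]
    field_simp
  · exact div_le_one_of_le₀ (le_pow_mul_exp hx.le) (by positivity)

end expPowIntegral

theorem tendsto_div_self_atTop_of_hasDerivAt {f f' : ℝ → ℝ} {L : ℝ}
    (hff' : ∀ᶠ t in atTop, HasDerivAt f (f' t) t) (hf' : Tendsto f' atTop (𝓝 L)) :
    Tendsto (fun t => f t / t) atTop (𝓝 L) := by
  set g : ℝ → ℝ := fun t => f t - L * t
  have hg : g =o[atTop] id := by
    refine isLittleO_iff.2 fun c hc => ?_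
    have hclose : ∀ᶠ t in atTop, ‖f' t - L‖ ≤ c / 2 :=
      (tendsto_iff_norm_sub_tendsto_zero.1 hf').eventually (eventually_le_nhds (by positivity))
    obtain ⟨T, hT⟩ := eventually_atTop.1 ((hff'.and hclose).and (eventually_ge_atTop 0))
    have hslope (x : ℝ) (hx : T ≤ x) : ‖g x - g T‖ ≤ c / 2 * (x - T) :=
      norm_image_sub_le_of_norm_deriv_le_segment' (f' := fun t => f' t - L)
        (fun t ht => ((hT t ht.1).1.1.sub ((hasDerivAt_id t).const_mul L)).hasDerivWithinAt
          |>.congr_deriv (by simp))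
        (fun t ht => (hT t ht.1).1.2) x ⟨hx, le_rfl⟩
    have hT0 : 0 ≤ T := (hT T le_rfl).2
    filter_upwards [eventually_ge_atTop T, eventually_ge_atTop (2 * ‖g T‖ / c)] with x hxT hxg
    rw [div_le_iff₀ hc] at hxg
    calc ‖g x‖ ≤ ‖g T‖ + ‖g x - g T‖ := norm_le_norm_add_norm_sub' _ _
      _ ≤ c * ‖x‖ := by rw [Real.norm_of_nonneg (show 0 ≤ x by linarith)]; nlinarith [hslope x hxT]
  rw [← zero_add L]
  refine (hg.tendsto_div_nhds_zero.add_const L).congr' ?_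
  filter_upwards [eventually_ne_atTop 0] with t ht
  simp only [g, id, sub_div, mul_div_cancel_right₀ _ ht]
  ring

section SolitonODE

variable {m : ℕ} {a : ℝ} {φ : ℝ → ℝ}

/-- `t ↦ expPowIntegral m (φ t) - exp (a t) / a` has zero derivative and tends to `0` at `-∞`. -/
theorem expPowIntegral_comp_eq_of_ode (ha : 0 < a) (hdiff : Differentiable ℝ φ)
    (hode : ∀ t, φ t ^ m * deriv φ t * exp (φ t) = exp (a * t))
    (hlim : Tendsto φ atBot (𝓝 0)) (t : ℝ) :
    expPowIntegral m (φ t) = exp (a * t) / a := by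
  set h : ℝ → ℝ := fun t => expPowIntegral m (φ t) - exp (a * t) / a
  have hh : ∀ t, HasDerivAt h 0 t := fun t => by
    have hF := (expPowIntegral.hasDerivAt m (φ t)).comp t (hdiff t).hasDerivAt
    have hE := (((hasDerivAt_id t).const_mul a).exp).div_const a
    refine (hF.sub hE).congr_deriv ?_
    simp only [id, mul_one]
    rw [mul_div_cancel_right₀ _ ha.ne', ← hode t]
    ring
  have hconst : ∀ s, h s = h t := fun s =>
    is_const_of_deriv_eq_zero (fun x => (hh x).differentiableAt) (fun x => (hh x).deriv) s t
  have hlim_h : Tendsto h atBot (𝓝 0) := by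
    have hF : Tendsto (fun s => expPowIntegral m (φ s)) atBot (𝓝 0) := by
      simpa [Function.comp_def] using
        ((expPowIntegral.hasDerivAt m 0).continuousAt.tendsto).comp hlim
    have hE : Tendsto (fun s => exp (a * s) / a) atBot (𝓝 0) := by
      simpa using (tendsto_exp_atBot.comp (tendsto_id.const_mul_atBot ha)).div_const a
    simpa using hF.sub hE
  have h0 : h t = 0 :=
    tendsto_nhds_unique (tendsto_const_nhds.congr fun s => (hconst s).symm) hlim_h
  simpa [h, sub_eq_zero] using h0

theorem tendsto_atTop_of_expPowIntegral_comp_eq (ha : 0 < a) (hφ : ∀ t, 0 ≤ φ t)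
    (hF : ∀ t, expPowIntegral m (φ t) = exp (a * t) / a) : Tendsto φ atTop atTop := by
  have hE : Tendsto (fun t => exp (a * t) / a) atTop atTop :=
    (tendsto_exp_atTop.comp (tendsto_id.const_mul_atTop ha)).atTop_div_const ha
  refine tendsto_atTop.2 fun b => ?_
  filter_upwards [hE.eventually_gt_atTop (expPowIntegral m (max b 0))] with t ht
  by_contra! hb
  have := expPowIntegral.monotoneOn m (hφ t) (le_max_right b 0) (hb.le.trans (le_max_left b 0))
  linarith [hF t]

end SolitonODE

/-- If `φ : ℝ → (0,∞)` is a differentiable solution of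
`φ^{n-1} φ' e^φ = e^{nt}` with `φ → 0` as `t → -∞`, then `φ(t)/t → n` and
`φ'(t) → n` as `t → ∞`. -/
theorem stmt_3 (n : ℕ) (hn : 1 ≤ n) (φ : ℝ → ℝ)
    (hpos : ∀ t, 0 < φ t) (hdiff : Differentiable ℝ φ)
    (hode : ∀ t : ℝ, φ t ^ (n - 1) * deriv φ t * Real.exp (φ t) = Real.exp (n * t))
    (hlim : Tendsto φ atBot (nhds 0)) :
    Tendsto (fun t => φ t / t) atTop (nhds (n : ℝ)) ∧
      Tendsto (deriv φ) atTop (nhds (n : ℝ)) := by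
  have hn0 : (0 : ℝ) < n := by exact_mod_cast hn
  have hF := expPowIntegral_comp_eq_of_ode hn0 hdiff hode hlim
  have htop := tendsto_atTop_of_expPowIntegral_comp_eq hn0 (fun t => (hpos t).le) hF
  have hderiv : ∀ t, deriv φ t =
      n * (expPowIntegral (n - 1) (φ t) / (φ t ^ (n - 1) * exp (φ t))) := fun t => by
    have := hpos t
    rw [hF, ← hode t]
    field_simp
  have hderiv_lim : Tendsto (deriv φ) atTop (𝓝 n) := by
    have := ((expPowIntegral.tendsto_div_pow_mul_exp (n - 1)).comp htop).const_mul (n : ℝ)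
    simpa using this.congr fun t => (hderiv t).symm
  exact ⟨tendsto_div_self_atTop_of_hasDerivAt
    (Eventually.of_forall fun t => (hdiff t).hasDerivAt) hderiv_lim, hderiv_lim⟩
end

section
/- Let n ≥ 1 and let φ : ℝ → (0,∞) be a solution of φ^{n-1} φ' e^φ = e^{nt} with φ(t) → 0 as t → -∞. Then φ(t) - φ'(t) > 0 for all t ∈ ℝ. -/
/-!
Since `(φ^n e^φ)' = n φ^{n-1} φ' e^φ + φ^n φ' e^φ` and `(e^{nt})' = n e^{nt}`, the equation
makes `h := φ^n e^φ - e^{nt}` satisfy `h' = φ^n e^φ φ' > 0`.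
Since `h → 0` at `-∞`, `h > 0`, i.e. `φ^{n-1} φ' e^φ = e^{nt} < φ^n e^φ`; cancelling `φ^{n-1} e^φ`
gives `φ' < φ`.
-/

open Filter Real Topology

theorem StrictMono.lt_of_tendsto_atBot {α β : Type*} [TopologicalSpace α] [Preorder α]
    [OrderClosedTopology α] [PartialOrder β] [IsCodirectedOrder β] [NoMinOrder β] {f : β → α} {a : α}
    (hf : StrictMono f) (ha : Tendsto f atBot (𝓝 a)) (b : β) : a < f b := by
  obtain ⟨c, hc⟩ := exists_lt b
  exact (hf.monotone.le_of_tendsto ha c).trans_lt (hf hc)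

section SolitonProfile

variable {n : ℕ} {φ : ℝ → ℝ}

lemma deriv_pos_of_soliton_ode {t : ℝ} (hnonneg : 0 ≤ φ t)
    (hode : φ t ^ (n - 1) * deriv φ t * exp (φ t) = exp (n * t)) : 0 < deriv φ t := by
  have hprod : 0 < φ t ^ (n - 1) * exp (φ t) * deriv φ t := by
    rw [mul_right_comm, hode]
    exact exp_pos _
  exact pos_of_mul_pos_right hprod (by positivity)

lemma hasDerivAt_pow_mul_exp_sub_exp_of_soliton_ode {t : ℝ} (hφ : DifferentiableAt ℝ φ t)
    (hode : φ t ^ (n - 1) * deriv φ t * exp (φ t) = exp (n * t)) :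
    HasDerivAt (fun s => φ s ^ n * exp (φ s) - exp (n * s))
      (φ t ^ n * exp (φ t) * deriv φ t) t := by
  have hexp : HasDerivAt (fun s : ℝ => exp (n * s)) (exp (n * t) * (n * 1)) t :=
    ((hasDerivAt_id t).const_mul (n : ℝ)).exp
  refine (((hφ.hasDerivAt.fun_pow n).mul hφ.hasDerivAt.exp).sub hexp).congr_deriv ?_
  rw [← hode]
  ring

theorem exp_nat_mul_lt_pow_mul_exp_of_soliton_ode (hpos : ∀ t, 0 < φ t)
    (hdiff : Differentiable ℝ φ)
    (hode : ∀ t, φ t ^ (n - 1) * deriv φ t * exp (φ t) = exp (n * t))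
    (hlim : Tendsto φ atBot (𝓝 0)) (t : ℝ) :
    exp (n * t) < φ t ^ n * exp (φ t) := by
  have hmono : StrictMono fun s => φ s ^ n * exp (φ s) - exp (n * s) :=
    strictMono_of_hasDerivAt_pos
      (fun s => hasDerivAt_pow_mul_exp_sub_exp_of_soliton_ode (hdiff s) (hode s))
      (fun s => by
        have := hpos s
        have := deriv_pos_of_soliton_ode (hpos s).le (hode s)
        positivity)
  -- Both terms tend to `0 ^ n`, which is `1` when `n = 0`.
  have hpow : Tendsto (fun s => φ s ^ n * exp (φ s)) atBot (𝓝 (0 ^ n)) := by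
    simpa using (hlim.pow n).mul ((continuous_exp.tendsto 0).comp hlim)
  have hexp : Tendsto (fun s : ℝ => exp (n * s)) atBot (𝓝 (0 ^ n)) := by
    simpa only [exp_nat_mul] using tendsto_exp_atBot.pow n
  exact sub_pos.mp (hmono.lt_of_tendsto_atBot (by simpa using hpow.sub hexp) t)

end SolitonProfile

/-- If `φ : ℝ → (0,∞)` is a differentiable solution of
`φ^{n-1} φ' e^φ = e^{nt}` with `φ → 0` as `t → -∞`, then `φ - φ' > 0` on `ℝ`. -/
theorem stmt_4 (n : ℕ) (hn : 1 ≤ n) (φ : ℝ → ℝ)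
    (hpos : ∀ t, 0 < φ t) (hdiff : Differentiable ℝ φ)
    (hode : ∀ t : ℝ, φ t ^ (n - 1) * deriv φ t * Real.exp (φ t) = Real.exp (n * t))
    (hlim : Tendsto φ atBot (nhds 0)) :
    ∀ t : ℝ, 0 < φ t - deriv φ t := by
  intro t
  have hlt := exp_nat_mul_lt_pow_mul_exp_of_soliton_ode hpos hdiff hode hlim t
  rw [← hode t, ← pow_sub_one_mul (by omega : n ≠ 0)] at hlt
  have hfactor : 0 < φ t ^ (n - 1) * exp (φ t) := by have := hpos t; positivity
  have hcancel : φ t ^ (n - 1) * exp (φ t) * deriv φ t < φ t ^ (n - 1) * exp (φ t) * φ t := by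
    linarith
  exact sub_pos.2 (lt_of_mul_lt_mul_left hcancel hfactor.le)
end

section
/- Let n ≥ 1 and let φ : ℝ → (0,∞) solve φ^{n-1} φ' e^φ = e^{nt} with φ(t) → 0 as t → -∞. Then (φ'(t))^2 - φ(t) φ''(t) > 0 for all t ∈ ℝ. -/
open Filter Real

noncomputable def Gfun (m : ℕ) (x : ℝ) : ℝ := ∫ s in (0:ℝ)..x, s ^ m * Real.exp s

lemma Gcont_aux (m : ℕ) : Continuous (fun s : ℝ => s ^ m * Real.exp s) := by continuity

lemma G_hasDeriv (m : ℕ) (x : ℝ) : HasDerivAt (Gfun m) (x ^ m * Real.exp x) x :=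
  ((Gcont_aux m).integral_hasStrictDerivAt 0 x).hasDerivAt

lemma G_zero (m : ℕ) : Gfun m 0 = 0 := by simp [Gfun]

lemma G_pos (m : ℕ) {x : ℝ} (hx : 0 < x) : 0 < Gfun m x := by
  apply intervalIntegral.intervalIntegral_pos_of_pos_on
    ((Gcont_aux m).intervalIntegrable 0 x)
  · intro s hs
    exact mul_pos (pow_pos hs.1 m) (Real.exp_pos s)
  · exact hx

lemma keyA (m : ℕ) {x : ℝ} (hx : 0 < x) :
    x ^ (m + 1) * Real.exp x < ((m : ℝ) + 1 + x) * Gfun m x := by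
  set H : ℝ → ℝ := fun y => ((m : ℝ) + 1 + y) * Gfun m y - y ^ (m + 1) * Real.exp y with hH
  have hderiv : ∀ y : ℝ, HasDerivAt H (Gfun m y) y := by
    intro y
    have h1 : HasDerivAt (fun y : ℝ => ((m:ℝ) + 1 + y) * Gfun m y)
        (1 * Gfun m y + ((m:ℝ) + 1 + y) * (y ^ m * Real.exp y)) y :=
      ((hasDerivAt_id y).const_add ((m:ℝ)+1)).mul (G_hasDeriv m y)
    have h2 : HasDerivAt (fun y : ℝ => y ^ (m+1) * Real.exp y)
        ((((m:ℝ)+1) * y ^ m) * Real.exp y + y ^ (m+1) * (Real.exp y)) y := by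
      have h := (hasDerivAt_pow (m+1) y).mul (Real.hasDerivAt_exp y)
      simp only [Nat.add_sub_cancel, Nat.cast_add, Nat.cast_one] at h
      exact h
    have := h1.sub h2
    refine this.congr_deriv (Eq.symm ?_)
    ring
  have hmono : StrictMonoOn H (Set.Ici (0:ℝ)) := by
    apply strictMonoOn_of_deriv_pos (convex_Ici 0)
    · exact fun y _ => (hderiv y).differentiableAt.continuousAt.continuousWithinAt
    · intro y hy
      rw [interior_Ici] at hy
      rw [(hderiv y).deriv]
      exact G_pos m hy
  have h0 : H 0 = 0 := by simp [hH, G_zero]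
  have := hmono Set.self_mem_Ici (le_of_lt hx) hx
  rw [h0] at this
  simp only [hH] at this
  linarith

/-- If `φ : ℝ → (0,∞)` is a smooth solution of
`φ^{n-1} φ' e^φ = e^{nt}` with `φ → 0` as `t → -∞`, then `(φ')² - φ φ'' > 0` on `ℝ`. -/
theorem stmt_5 (n : ℕ) (hn : 1 ≤ n) (φ : ℝ → ℝ)
    (hpos : ∀ t, 0 < φ t) (hsmooth : ContDiff ℝ (⊤ : ℕ∞) φ)
    (hode : ∀ t : ℝ, φ t ^ (n - 1) * deriv φ t * Real.exp (φ t) = Real.exp (n * t))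
    (hlim : Tendsto φ atBot (nhds 0)) :
    ∀ t : ℝ, 0 < (deriv φ t) ^ 2 - φ t * iteratedDeriv 2 φ t := by
  obtain ⟨m, rfl⟩ : ∃ m, n = m + 1 := ⟨n - 1, (Nat.succ_pred_eq_of_pos hn).symm⟩
  simp only [Nat.add_sub_cancel] at hode
  push_cast at hode
  -- hode : ∀ t, φ t ^ m * deriv φ t * exp (φ t) = exp ((↑m + 1) * t)
  have hdiff : Differentiable ℝ φ := hsmooth.differentiable (by simp)
  have hφ' : ∀ t, HasDerivAt φ (deriv φ t) t := fun t => (hdiff t).hasDerivAt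
  have hdiff' : Differentiable ℝ (deriv φ) := by
    have h2 : ContDiff ℝ ((⊤:ℕ∞) : WithTop ℕ∞) φ := hsmooth.of_le (by simp)
    exact ((contDiff_infty_iff_deriv.mp h2).2).differentiable (by simp)
  -- positivity of deriv φ
  have hq : ∀ t, 0 < deriv φ t := by
    intro t
    have hb : 0 < φ t ^ m * Real.exp (φ t) := mul_pos (pow_pos (hpos t) m) (Real.exp_pos _)
    have hmul : 0 < (φ t ^ m * Real.exp (φ t)) * deriv φ t := by
      have h := hode t
      have := Real.exp_pos (((m:ℝ) + 1) * t)
      nlinarith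
    nlinarith
  -- conservation law: (m+1) * G(φ t) = exp ((m+1) t)
  have hG : ∀ s : ℝ, ((m:ℝ) + 1) * Gfun m (φ s) = Real.exp (((m:ℝ) + 1) * s) := by
    set F : ℝ → ℝ := fun s => Gfun m (φ s) - Real.exp (((m:ℝ)+1)*s)/((m:ℝ)+1) with hFdef
    have hm1 : (0:ℝ) < (m:ℝ) + 1 := by positivity
    have hF : ∀ s, HasDerivAt F 0 s := by
      intro s
      have h1 : HasDerivAt (fun u => Gfun m (φ u))
          (φ s ^ m * Real.exp (φ s) * deriv φ s) s :=
        (G_hasDeriv m (φ s)).comp s (hφ' s)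
      have h2 : HasDerivAt (fun u : ℝ => Real.exp (((m:ℝ)+1)*u)/((m:ℝ)+1))
          (Real.exp (((m:ℝ)+1)*s)) s := by
        have h3 := (((hasDerivAt_id s).const_mul ((m:ℝ)+1)).exp).div_const ((m:ℝ)+1)
        refine h3.congr_deriv (Eq.symm ?_)
        field_simp
        rfl
      have := h1.sub h2
      refine this.congr_deriv (Eq.symm ?_)
      linear_combination - hode s
    have hFconst : ∀ x y : ℝ, F x = F y := fun x y =>
      is_const_of_deriv_eq_zero (fun s => (hF s).differentiableAt) (fun s => (hF s).deriv) x y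
    have hGdiff : Differentiable ℝ (Gfun m) := fun x => (G_hasDeriv m x).differentiableAt
    have hGcont : Continuous (Gfun m) := hGdiff.continuous
    have t1 : Tendsto (fun s => Gfun m (φ s)) atBot (nhds 0) := by
      have := (hGcont.tendsto 0).comp hlim
      rwa [G_zero] at this
    have t2 : Tendsto (fun s : ℝ => Real.exp (((m:ℝ)+1)*s)/((m:ℝ)+1)) atBot (nhds 0) := by
      have ha : Tendsto (fun s : ℝ => ((m:ℝ)+1)*s) atBot atBot :=
        tendsto_id.const_mul_atBot hm1
      have := (Real.tendsto_exp_atBot.comp ha).div_const ((m:ℝ)+1)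
      simpa using this
    have hFlim : Tendsto F atBot (nhds 0) := by
      have := t1.sub t2
      simpa using this
    intro s
    have hcs : Tendsto F atBot (nhds (F s)) := by
      have : F = fun _ => F s := funext fun x => hFconst x s
      rw [this]; exact tendsto_const_nhds
    have hFs : F s = 0 := tendsto_nhds_unique hcs hFlim
    simp only [hFdef, sub_eq_zero] at hFs
    rw [hFs]
    field_simp
  intro t
  have hp : 0 < φ t := hpos t
  have he : 0 < Real.exp (φ t) := Real.exp_pos _
  -- differentiate the ODE
  have hA : HasDerivAt (fun u => φ u ^ m) ((m:ℝ) * φ t ^ (m-1) * deriv φ t) t := (hφ' t).pow m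
  have hB : HasDerivAt (deriv φ) (deriv (deriv φ) t) t := (hdiff' t).hasDerivAt
  have hC : HasDerivAt (fun u => Real.exp (φ u)) (Real.exp (φ t) * deriv φ t) t := (hφ' t).exp
  have hL : HasDerivAt (fun u => φ u ^ m * deriv φ u * Real.exp (φ u))
      (((m:ℝ) * φ t ^ (m-1) * deriv φ t * deriv φ t + φ t ^ m * deriv (deriv φ) t)
        * Real.exp (φ t) + φ t ^ m * deriv φ t * (Real.exp (φ t) * deriv φ t)) t :=
    (hA.mul hB).mul hC
  have hR : HasDerivAt (fun u => φ u ^ m * deriv φ u * Real.exp (φ u))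
      (((m:ℝ)+1) * Real.exp (((m:ℝ)+1) * t)) t := by
    have h4 := ((hasDerivAt_id t).const_mul ((m:ℝ)+1)).exp
    have h5 : HasDerivAt (fun u : ℝ => Real.exp (((m:ℝ)+1)*u))
        (((m:ℝ)+1) * Real.exp (((m:ℝ)+1) * t)) t := by
      simpa [mul_comm] using h4
    exact h5.congr_of_eventuallyEq (Filter.Eventually.of_forall fun x => hode x)
  have hE := hL.unique hR
  set p := φ t
  set q := deriv φ t
  set r := deriv (deriv φ) t
  set X := Real.exp (((m:ℝ)+1) * t) with hX
  have h1 : p ^ m * q * Real.exp p = X := hode t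
  have h3 : ((m:ℝ) + 1) * Gfun m p = X := hG t
  have hmm : (m:ℝ) * p ^ (m-1) * p = (m:ℝ) * p ^ m := by
    cases m with
    | zero => simp
    | succ k => rw [Nat.add_sub_cancel, pow_succ]; ring
  have hpe : 0 < p ^ m * Real.exp p := by positivity
  -- positivity of S := (m+1+p)q - (m+1)p
  have hS : 0 < ((m:ℝ)+1+p) * q - ((m:ℝ)+1) * p := by
    have h4 := keyA m hp
    have h5 : 0 < (((m:ℝ)+1+p) * q - ((m:ℝ)+1) * p) * (p ^ m * Real.exp p) := by
      have h6 : 0 < ((m:ℝ)+1) * (((m:ℝ)+1+p) * Gfun m p - p ^ (m+1) * Real.exp p) := by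
        have : (0:ℝ) < (m:ℝ) + 1 := by positivity
        exact mul_pos this (sub_pos.mpr h4)
      have h7 : ((m:ℝ)+1) * (((m:ℝ)+1+p) * Gfun m p - p ^ (m+1) * Real.exp p)
          = (((m:ℝ)+1+p) * q - ((m:ℝ)+1) * p) * (p ^ m * Real.exp p) := by
        linear_combination ((m:ℝ)+1+p) * h3 - ((m:ℝ)+1+p) * h1
      rwa [h7] at h6
    have := div_pos h5 hpe
    rwa [mul_div_assoc, div_self hpe.ne', mul_one] at this
  -- express p * r
  have hkey : p ^ m * Real.exp p * ((m:ℝ)*q^2 + p*r + p*q^2)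
      = p ^ m * Real.exp p * (((m:ℝ)+1)*p*q) := by
    linear_combination p * hE - ((m:ℝ)+1) * p * h1 - q^2 * Real.exp p * hmm
  have hcancel : (m:ℝ)*q^2 + p*r + p*q^2 = ((m:ℝ)+1)*p*q :=
    mul_left_cancel₀ hpe.ne' hkey
  have hir : iteratedDeriv 2 φ t = r := by
    rw [iteratedDeriv_succ, iteratedDeriv_one]
  rw [hir]
  have hfin : q^2 - p*r = q * (((m:ℝ)+1+p) * q - ((m:ℝ)+1) * p) := by
    linear_combination - hcancel
  rw [hfin]
  exact mul_pos (hq t) hS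
end

section
/- Let n ≥ 1 and let φ : ℝ → (0,∞) solve φ^{n-1} φ' e^φ = e^{nt} with φ(t) → 0 as t → -∞. Then (φ''(t))^2 - φ'(t) φ'''(t) > 0 for all t ∈ ℝ. -/
open Filter Real

/-- If `F` has nonnegative derivative and tends to `L` at `-∞`, then `L ≤ F`. -/
lemma stmt6_aux_le (F F' : ℝ → ℝ) (h : ∀ t, HasDerivAt F (F' t) t)
    (h' : ∀ t, 0 ≤ F' t) (L : ℝ) (hlim : Tendsto F atBot (nhds L)) (t : ℝ) :
    L ≤ F t := by
  have hmono : Monotone F :=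
    monotone_of_deriv_nonneg (fun x => (h x).differentiableAt)
      (fun x => by rw [(h x).deriv]; exact h' x)
  exact le_of_tendsto hlim (eventually_atBot.mpr ⟨t, fun s hs => hmono hs⟩)

/-- If `F` has positive derivative and tends to `0` at `-∞`, then `0 < F`. -/
lemma stmt6_aux_pos (F F' : ℝ → ℝ) (h : ∀ t, HasDerivAt F (F' t) t)
    (h' : ∀ t, 0 < F' t) (hlim : Tendsto F atBot (nhds 0)) (t : ℝ) :
    0 < F t := by
  have hsm : StrictMono F :=
    strictMono_of_deriv_pos (fun x => by rw [(h x).deriv]; exact h' x)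
  have h1 : (0:ℝ) ≤ F (t - 1) :=
    stmt6_aux_le F F' h (fun s => (h' s).le) 0 hlim (t - 1)
  exact lt_of_le_of_lt h1 (hsm (by linarith))

set_option maxHeartbeats 1000000 in
/-- If `φ : ℝ → (0,∞)` is a smooth solution of
`φ^{n-1} φ' e^φ = e^{nt}` with `φ → 0` as `t → -∞`, then `(φ'')² - φ' φ''' > 0` on `ℝ`. -/
theorem stmt_6 (n : ℕ) (hn : 1 ≤ n) (φ : ℝ → ℝ)
    (hpos : ∀ t, 0 < φ t) (hsmooth : ContDiff ℝ (⊤ : ℕ∞) φ)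
    (hode : ∀ t : ℝ, φ t ^ (n - 1) * deriv φ t * Real.exp (φ t) = Real.exp (n * t))
    (hlim : Tendsto φ atBot (nhds 0)) :
    ∀ t : ℝ, 0 < (iteratedDeriv 2 φ t) ^ 2 - deriv φ t * iteratedDeriv 3 φ t := by
  obtain ⟨m, rfl⟩ : ∃ m, n = m + 1 := ⟨n - 1, (Nat.succ_pred_eq_of_pos hn).symm⟩
  obtain ⟨hdiff, hsa⟩ := contDiff_infty_iff_deriv.mp (hsmooth.of_le (mod_cast le_top))
  obtain ⟨hdiffa, hsb⟩ := contDiff_infty_iff_deriv.mp hsa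
  obtain ⟨hdiffb, -⟩ := contDiff_infty_iff_deriv.mp hsb
  set a := deriv φ with ha_def
  set b := deriv a with hb_def
  set c := deriv b with hc_def
  have hφ : ∀ t, HasDerivAt φ (a t) t := fun t => (hdiff t).hasDerivAt
  have hA : ∀ t, HasDerivAt a (b t) t := fun t => (hdiffa t).hasDerivAt
  have hB : ∀ t, HasDerivAt b (c t) t := fun t => (hdiffb t).hasDerivAt
  -- rewritten ODE
  have hode' : ∀ t, φ t ^ m * a t * Real.exp (φ t) = Real.exp (((m:ℝ) + 1) * t) := by
    intro t
    have h := hode t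
    push_cast at h
    simpa using h
  have hi2 : iteratedDeriv 2 φ = b := by
    rw [hb_def, ha_def, show (2:ℕ) = 1 + 1 from rfl, iteratedDeriv_succ, iteratedDeriv_one]
  have hi3 : iteratedDeriv 3 φ = c := by
    rw [hc_def, show (3:ℕ) = 2 + 1 from rfl, iteratedDeriv_succ, hi2]
  -- positivity of a
  have hapos : ∀ t, 0 < a t := by
    intro t
    have hden : (0:ℝ) < φ t ^ m * Real.exp (φ t) :=
      mul_pos (pow_pos (hpos t) m) (Real.exp_pos _)
    have h1 : a t = Real.exp (((m:ℝ) + 1) * t) / (φ t ^ m * Real.exp (φ t)) := by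
      rw [eq_div_iff hden.ne']
      linear_combination hode' t
    rw [h1]
    exact div_pos (Real.exp_pos _) hden
  -- helper derivative facts
  have hX : ∀ t, HasDerivAt (fun s => Real.exp (φ s)) (Real.exp (φ t) * a t) t :=
    fun t => (hφ t).exp
  have hE : ∀ t, HasDerivAt (fun s => Real.exp (((m:ℝ) + 1) * s))
      (Real.exp (((m:ℝ) + 1) * t) * ((m:ℝ) + 1)) t := by
    intro t
    have hid : HasDerivAt (fun s : ℝ => ((m:ℝ) + 1) * s) ((m:ℝ) + 1) t := by
      simpa using (hasDerivAt_id t).const_mul ((m:ℝ) + 1)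
    exact hid.exp
  have hpow : ∀ t, (m:ℝ) * φ t ^ (m - 1) * φ t = (m:ℝ) * φ t ^ m := by
    intro t
    cases m with
    | zero => simp
    | succ k => push_cast; rw [pow_succ]; ring
  -- second derivative relation : b*φ = (m+1)*(a*φ) - a²*φ - m*a²
  have hbφ : ∀ t, b t * φ t = ((m:ℝ) + 1) * (a t * φ t) - a t ^ 2 * φ t - (m:ℝ) * a t ^ 2 := by
    intro t
    have e1 : HasDerivAt (fun s => φ s ^ m * a s * Real.exp (φ s))
        (((m:ℝ) * φ t ^ (m - 1) * a t * a t + φ t ^ m * b t) * Real.exp (φ t)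
          + φ t ^ m * a t * (Real.exp (φ t) * a t)) t :=
      (((hφ t).pow m).mul (hA t)).mul (hX t)
    have e2 : HasDerivAt (fun s => φ s ^ m * a s * Real.exp (φ s))
        (Real.exp (((m:ℝ) + 1) * t) * ((m:ℝ) + 1)) t := by
      have := hE t
      rwa [show (fun s => Real.exp (((m:ℝ) + 1) * s))
        = fun s => φ s ^ m * a s * Real.exp (φ s) from (funext hode').symm] at this
    have keyD := e1.unique e2
    have hc0 : (φ t ^ m * Real.exp (φ t)) ≠ 0 := (mul_pos (pow_pos (hpos t) m) (Real.exp_pos _)).ne'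
    apply mul_right_cancel₀ hc0
    linear_combination (φ t) * keyD - ((m:ℝ) + 1) * φ t * hode' t - a t ^ 2 * Real.exp (φ t) * hpow t
  -- third derivative relation
  have hcφ : ∀ t, c t * φ t + b t * a t
      = ((m:ℝ) + 1) * (b t * φ t + a t * a t) - ((2:ℝ) * a t ^ (2 - 1) * b t * φ t + a t ^ 2 * a t)
        - (m:ℝ) * ((2:ℝ) * a t ^ (2 - 1) * b t) := by
    intro t
    have e1 : HasDerivAt (fun s => b s * φ s) (c t * φ t + b t * a t) t := (hB t).mul (hφ t)
    have e2 : HasDerivAt (fun s => b s * φ s)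
        (((m:ℝ) + 1) * (b t * φ t + a t * a t) - ((2:ℝ) * a t ^ (2 - 1) * b t * φ t + a t ^ 2 * a t)
          - (m:ℝ) * ((2:ℝ) * a t ^ (2 - 1) * b t)) t := by
      have r1 : HasDerivAt (fun s => ((m:ℝ) + 1) * (a s * φ s))
          (((m:ℝ) + 1) * (b t * φ t + a t * a t)) t := ((hA t).mul (hφ t)).const_mul _
      have r2 : HasDerivAt (fun s => a s ^ 2 * φ s)
          (((2:ℕ):ℝ) * a t ^ (2 - 1) * b t * φ t + a t ^ 2 * a t) t := ((hA t).pow 2).mul (hφ t)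
      have r3 : HasDerivAt (fun s => (m:ℝ) * a s ^ 2)
          ((m:ℝ) * (((2:ℕ):ℝ) * a t ^ (2 - 1) * b t)) t := ((hA t).pow 2).const_mul _
      have := (r1.sub r2).sub r3
      have hfun : (fun s => ((m:ℝ) + 1) * (a s * φ s) - a s ^ 2 * φ s - (m:ℝ) * a s ^ 2)
          = fun s => b s * φ s := (funext hbφ).symm
      change HasDerivAt (fun s => ((m:ℝ) + 1) * (a s * φ s) - a s ^ 2 * φ s - (m:ℝ) * a s ^ 2) _ t at this
      rw [hfun] at this
      push_cast at this
      convert this using 1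
    exact e1.unique e2
  -- the function k and its positivity (equivalently a < m+1)
  set k : ℝ → ℝ := fun s => ((m:ℝ) + 1) * (φ s ^ m * Real.exp (φ s)) - Real.exp (((m:ℝ) + 1) * s)
    with hk_def
  have hk' : ∀ t, HasDerivAt k
      ((((m:ℝ) + 1) * (m:ℝ)) * (φ t ^ (m - 1) * (a t * Real.exp (φ t)))) t := by
    intro t
    have raw := (((hφ t).pow m).mul (hX t)).const_mul ((m:ℝ) + 1) |>.sub (hE t)
    refine raw.congr_deriv (Eq.symm ?_)
    simp only [Pi.pow_apply, Pi.add_apply]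
    linear_combination (-((m:ℝ) + 1)) * hode' t
  have hlimE : Tendsto (fun s => Real.exp (((m:ℝ) + 1) * s)) atBot (nhds 0) := by
    have h1 : Tendsto (fun s : ℝ => ((m:ℝ) + 1) * s) atBot atBot :=
      Tendsto.const_mul_atBot (by positivity) tendsto_id
    simpa [Function.comp_def] using Real.tendsto_exp_atBot.comp h1
  have hkpos : ∀ t, 0 < k t := by
    have limk : Tendsto k atBot (nhds (((m:ℝ) + 1) * ((0:ℝ) ^ m * Real.exp 0) - 0)) := by
      have hc1 : Continuous fun x : ℝ => ((m:ℝ) + 1) * (x ^ m * Real.exp x) :=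
        continuous_const.mul ((continuous_pow _).mul Real.continuous_exp)
      exact Tendsto.sub (by simpa [Function.comp_def] using (hc1.tendsto 0).comp hlim) hlimE
    rcases Nat.eq_zero_or_pos m with hm | hm
    · intro t
      have L1 : Tendsto k atBot (nhds 1) := by
        have : ((m:ℝ) + 1) * ((0:ℝ) ^ m * Real.exp 0) - 0 = 1 := by simp [hm]
        rwa [this] at limk
      have := stmt6_aux_le k _ hk' (fun s => by
        apply mul_nonneg (by positivity)
        exact mul_nonneg (pow_nonneg (hpos s).le _)
          (mul_nonneg (hapos s).le (Real.exp_pos _).le)) 1 L1 t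
      linarith
    · intro t
      have L0 : Tendsto k atBot (nhds 0) := by
        have : ((m:ℝ) + 1) * ((0:ℝ) ^ m * Real.exp 0) - 0 = 0 := by
          simp [zero_pow hm.ne']
        rwa [this] at limk
      refine stmt6_aux_pos k _ hk' (fun s => ?_) L0 t
      have hm' : (0:ℝ) < m := by exact_mod_cast hm
      apply mul_pos (by positivity)
      exact mul_pos (pow_pos (hpos s) _) (mul_pos (hapos s) (Real.exp_pos _))
  have ha_lt : ∀ t, a t < (m:ℝ) + 1 := by
    intro t
    have h1 : k t = (((m:ℝ) + 1) - a t) * (φ t ^ m * Real.exp (φ t)) := by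
      rw [hk_def]
      linear_combination hode' t
    have h2 := hkpos t
    rw [h1] at h2
    have h3 : (0:ℝ) < φ t ^ m * Real.exp (φ t) :=
      mul_pos (pow_pos (hpos t) m) (Real.exp_pos _)
    nlinarith
  -- the function g and its positivity
  set g : ℝ → ℝ := fun s => ((m:ℝ) + 1) * (φ s ^ (m + 1) * Real.exp (φ s))
      - Real.exp (((m:ℝ) + 1) * s) * (φ s + (m:ℝ)) with hg_def
  have hg' : ∀ t, HasDerivAt g (Real.exp (((m:ℝ) + 1) * t) * (((m:ℝ) + 1) - a t)) t := by
    intro t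
    have raw := ((((hφ t).pow (m + 1)).mul (hX t)).const_mul ((m:ℝ) + 1)).sub
      ((hE t).mul ((hφ t).add_const (m:ℝ)))
    refine raw.congr_deriv (Eq.symm ?_)
    simp only [Pi.pow_apply, Pi.add_apply]
    push_cast
    try simp only [Nat.add_sub_cancel]
    linear_combination (- ((m:ℝ) + 1) * (φ t + (m:ℝ) + 1)) * hode' t
  have hgpos : ∀ t, 0 < g t := by
    have limg : Tendsto g atBot (nhds 0) := by
      have hc1 : Continuous fun x : ℝ => ((m:ℝ) + 1) * (x ^ (m + 1) * Real.exp x) :=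
        continuous_const.mul ((continuous_pow _).mul Real.continuous_exp)
      have l1 : Tendsto (fun s => ((m:ℝ) + 1) * (φ s ^ (m + 1) * Real.exp (φ s))) atBot
          (nhds (((m:ℝ) + 1) * ((0:ℝ) ^ (m + 1) * Real.exp 0))) := by
        simpa [Function.comp_def] using (hc1.tendsto 0).comp hlim
      have l2 : Tendsto (fun s => Real.exp (((m:ℝ) + 1) * s) * (φ s + (m:ℝ))) atBot
          (nhds (0 * (0 + (m:ℝ)))) := hlimE.mul (hlim.add_const (m:ℝ))
      have := l1.sub l2
      simpa using this
    refine fun t => stmt6_aux_pos g _ hg' (fun s => ?_) limg t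
    exact mul_pos (Real.exp_pos _) (by linarith [ha_lt s])
  -- the function f and its positivity
  set f : ℝ → ℝ := fun s => (((m:ℝ) + 1) * (φ s ^ (m + 2) * Real.exp (φ s))
      + ((m:ℝ) + 1) * (m:ℝ) * (φ s ^ (m + 1) * Real.exp (φ s)))
      - Real.exp (((m:ℝ) + 1) * s) * (φ s ^ 2 + 2 * (m:ℝ) * φ s + (m:ℝ) * ((m:ℝ) + 1))
    with hf_def
  have hf' : ∀ t, HasDerivAt f
      (2 * Real.exp (((m:ℝ) + 1) * t) * (((m:ℝ) + 1) * φ t - a t * (φ t + (m:ℝ)))) t := by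
    intro t
    have p1 := (((hφ t).pow (m + 2)).mul (hX t)).const_mul ((m:ℝ) + 1)
    have p2 := (((hφ t).pow (m + 1)).mul (hX t)).const_mul (((m:ℝ) + 1) * (m:ℝ))
    have p3 := (hE t).mul ((((hφ t).pow 2).add ((hφ t).const_mul (2 * (m:ℝ)))).add_const
      ((m:ℝ) * ((m:ℝ) + 1)))
    have raw := (p1.add p2).sub p3
    refine raw.congr_deriv (Eq.symm ?_)
    simp only [Pi.pow_apply, Pi.add_apply]
    push_cast
    try simp only [Nat.add_sub_cancel, show m + 2 - 1 = m + 1 by omega]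
    linear_combination (- ((m:ℝ) + 1) * (φ t ^ 2 + 2 * ((m:ℝ) + 1) * φ t + (m:ℝ) * ((m:ℝ) + 1)))
      * hode' t
  have hfpos : ∀ t, 0 < f t := by
    have limf : Tendsto f atBot (nhds 0) := by
      have hc1 : Continuous fun x : ℝ => ((m:ℝ) + 1) * (x ^ (m + 2) * Real.exp x)
          + ((m:ℝ) + 1) * (m:ℝ) * (x ^ (m + 1) * Real.exp x) :=
        (continuous_const.mul ((continuous_pow _).mul Real.continuous_exp)).add
          (continuous_const.mul ((continuous_pow _).mul Real.continuous_exp))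
      have l1 : Tendsto (fun s => ((m:ℝ) + 1) * (φ s ^ (m + 2) * Real.exp (φ s))
          + ((m:ℝ) + 1) * (m:ℝ) * (φ s ^ (m + 1) * Real.exp (φ s))) atBot
          (nhds (((m:ℝ) + 1) * ((0:ℝ) ^ (m + 2) * Real.exp 0)
            + ((m:ℝ) + 1) * (m:ℝ) * ((0:ℝ) ^ (m + 1) * Real.exp 0))) := by
        simpa [Function.comp_def] using (hc1.tendsto 0).comp hlim
      have hc2 : Continuous fun x : ℝ => x ^ 2 + 2 * (m:ℝ) * x + (m:ℝ) * ((m:ℝ) + 1) :=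
        ((continuous_pow 2).add (continuous_const.mul continuous_id)).add continuous_const
      have l2 : Tendsto (fun s => Real.exp (((m:ℝ) + 1) * s)
          * (φ s ^ 2 + 2 * (m:ℝ) * φ s + (m:ℝ) * ((m:ℝ) + 1))) atBot
          (nhds (0 * ((0:ℝ) ^ 2 + 2 * (m:ℝ) * 0 + (m:ℝ) * ((m:ℝ) + 1)))) :=
        hlimE.mul (by simpa [Function.comp_def] using (hc2.tendsto 0).comp hlim)
      have := l1.sub l2
      simpa using this
    refine fun t => stmt6_aux_pos f _ hf' (fun s => ?_) limf t
    have h1 : (((m:ℝ) + 1) * φ s - a s * (φ s + (m:ℝ))) * (φ s ^ m * Real.exp (φ s)) = g s := by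
      rw [hg_def]
      linear_combination (- (φ s + (m:ℝ))) * hode' s
    have h2 := hgpos s
    have h3 : (0:ℝ) < φ s ^ m * Real.exp (φ s) :=
      mul_pos (pow_pos (hpos s) m) (Real.exp_pos _)
    have h4 : 0 < ((m:ℝ) + 1) * φ s - a s * (φ s + (m:ℝ)) := by nlinarith
    have := Real.exp_pos (((m:ℝ) + 1) * s)
    nlinarith
  -- conclusion
  intro t
  rw [hi2, hi3]
  have hq : φ t ≠ 0 := (hpos t).ne'
  have hbt : b t = (((m:ℝ) + 1) * (a t * φ t) - a t ^ 2 * φ t - (m:ℝ) * a t ^ 2) / φ t := by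
    rw [eq_div_iff hq]
    exact hbφ t
  have hct : c t = (((m:ℝ) + 1) * (b t * φ t + a t * a t)
      - ((2:ℝ) * a t ^ (2 - 1) * b t * φ t + a t ^ 2 * a t)
      - (m:ℝ) * ((2:ℝ) * a t ^ (2 - 1) * b t) - b t * a t) / φ t := by
    rw [eq_div_iff hq]
    linear_combination hcφ t
  have hmulpos : (0:ℝ) < φ t ^ 2 * (φ t ^ m * Real.exp (φ t)) :=
    mul_pos (pow_pos (hpos t) 2) (mul_pos (pow_pos (hpos t) m) (Real.exp_pos _))
  have key : (b t ^ 2 - a t * c t) * (φ t ^ 2 * (φ t ^ m * Real.exp (φ t))) = a t ^ 3 * f t := by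
    simp only [hf_def]
    rw [hct, hbt, ← hode' t]
    field_simp
    ring
  have h2 : 0 < (b t ^ 2 - a t * c t) * (φ t ^ 2 * (φ t ^ m * Real.exp (φ t))) := by
    rw [key]
    exact mul_pos (pow_pos (hapos t) 3) (hfpos t)
  nlinarith [h2, hmulpos]
end

section
/- Let n ≥ 2. Define c : [0,∞) → ℝ by c(φ) = n φ^{n+1} e^φ + n(n-1) φ^n e^φ - (φ² + 2(n-1)φ + n(n-1)) E(φ), where E(φ) = ∑_{k=0}^{n-1} (-1)^{n-k-1} (n!/k!) φ^k e^φ - (-1)^{n-1} n! (so that dE/dφ = n φ^{n-1} e^φ). Then c(0) = c'(0) = c''(0) = 0, c'''(φ) = 2n(n-1) φ^{n-2} e^φ, and consequently c(φ) > 0 for all φ > 0. -/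
open Finset Real

noncomputable def aa (m k : ℕ) : ℝ :=
  (-1 : ℝ) ^ (m + 2 - k - 1) * ((Nat.factorial (m + 2) : ℝ) / (Nat.factorial k : ℝ))

noncomputable def EE (m : ℕ) : ℝ → ℝ := fun x =>
  (∑ k ∈ Finset.range (m + 2), aa m k * x ^ k) * Real.exp x
    - (-1 : ℝ) ^ (m + 2 - 1) * (Nat.factorial (m + 2) : ℝ)

lemma key_ident (m : ℕ) (x : ℝ) :
    (∑ k ∈ Finset.range (m + 2), aa m k * ((k : ℝ) * x ^ (k - 1)))
      + ∑ k ∈ Finset.range (m + 2), aa m k * x ^ k = ((m : ℝ) + 2) * x ^ (m + 1) := by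
  rw [Finset.sum_range_succ' (fun k => aa m k * ((k : ℝ) * x ^ (k - 1))),
    Finset.sum_range_succ (fun k => aa m k * x ^ k)]
  have h : ∀ i ∈ Finset.range (m + 1),
      aa m (i + 1) * (((i : ℝ) + 1) * x ^ (i + 1 - 1)) = - (aa m i * x ^ i) := by
    intro i hi
    rw [Finset.mem_range] at hi
    have h1 : m + 2 - (i + 1) - 1 = m - i := by omega
    have h2 : m + 2 - i - 1 = (m - i) + 1 := by omega
    have hf : (Nat.factorial i : ℝ) ≠ 0 := Nat.cast_ne_zero.2 i.factorial_ne_zero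
    have hi1 : ((i : ℝ) + 1) ≠ 0 := by positivity
    simp only [aa, h1, h2, Nat.factorial_succ, Nat.add_sub_cancel, pow_succ]
    push_cast
    field_simp
  have hsum : (∑ i ∈ Finset.range (m + 1),
      aa m (i + 1) * (((i : ℝ) + 1) * x ^ (i + 1 - 1)))
      = - ∑ i ∈ Finset.range (m + 1), aa m i * x ^ i := by
    rw [← Finset.sum_neg_distrib]
    exact Finset.sum_congr rfl h
  clear h
  have haa : aa m (m + 1) = (m : ℝ) + 2 := by
    have h3 : m + 2 - (m + 1) - 1 = 0 := by omega
    have hf : (Nat.factorial (m + 1) : ℝ) ≠ 0 := Nat.cast_ne_zero.2 (m + 1).factorial_ne_zero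
    simp only [aa, h3, pow_zero, one_mul, Nat.factorial_succ]
    push_cast
    field_simp
    ring
  push_cast at hsum ⊢
  rw [hsum, haa]
  ring

lemma EE_hasDeriv (m : ℕ) (x : ℝ) :
    HasDerivAt (EE m) (((m : ℝ) + 2) * x ^ (m + 1) * Real.exp x) x := by
  have hS : HasDerivAt (fun x : ℝ => ∑ k ∈ Finset.range (m + 2), aa m k * x ^ k)
      (∑ k ∈ Finset.range (m + 2), aa m k * ((k : ℝ) * x ^ (k - 1))) x := by
    apply HasDerivAt.fun_sum
    intro k _
    exact (hasDerivAt_pow k x).const_mul (aa m k)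
  have h := ((hS.fun_mul (Real.hasDerivAt_exp x)).sub_const
    ((-1 : ℝ) ^ (m + 2 - 1) * (Nat.factorial (m + 2) : ℝ)))
  have heq : (∑ k ∈ Finset.range (m + 2), aa m k * ((k : ℝ) * x ^ (k - 1))) * Real.exp x
      + (∑ k ∈ Finset.range (m + 2), aa m k * x ^ k) * Real.exp x
      = ((m : ℝ) + 2) * x ^ (m + 1) * Real.exp x := by
    rw [← add_mul, key_ident]
  rw [heq] at h
  exact h

lemma EE_zero (m : ℕ) : EE m 0 = 0 := by
  have hsum : (∑ k ∈ Finset.range (m + 2), aa m k * (0 : ℝ) ^ k) = aa m 0 := by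
    rw [Finset.sum_eq_single 0]
    · simp
    · intro k _ hk
      simp [zero_pow hk]
    · simp
  simp only [EE, hsum, Real.exp_zero, mul_one]
  have : m + 2 - 0 - 1 = m + 2 - 1 := by omega
  simp [aa, this, Nat.factorial_zero]

noncomputable def CC (m : ℕ) : ℝ → ℝ := fun x =>
  ((m : ℝ) + 2) * x ^ (m + 3) * Real.exp x
    + ((m : ℝ) + 2) * ((m : ℝ) + 1) * x ^ (m + 2) * Real.exp x
    - (x ^ 2 + 2 * ((m : ℝ) + 1) * x + ((m : ℝ) + 2) * ((m : ℝ) + 1)) * EE m x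

noncomputable def D1 (m : ℕ) : ℝ → ℝ := fun x =>
  2 * ((m : ℝ) + 2) * x ^ (m + 2) * Real.exp x - (2 * x + 2 * ((m : ℝ) + 1)) * EE m x

noncomputable def D2 (m : ℕ) : ℝ → ℝ := fun x =>
  2 * ((m : ℝ) + 2) * x ^ (m + 1) * Real.exp x - 2 * EE m x

lemma CC_hasDeriv (m : ℕ) (x : ℝ) : HasDerivAt (CC m) (D1 m x) x := by
  have h1 : HasDerivAt (fun x : ℝ => ((m : ℝ) + 2) * x ^ (m + 3) * Real.exp x)
      (((m : ℝ) + 2) * (((m : ℝ) + 3) * x ^ (m + 2)) * Real.exp x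
        + ((m : ℝ) + 2) * x ^ (m + 3) * Real.exp x) x := by
    have := (((hasDerivAt_pow (m + 3) x).const_mul ((m : ℝ) + 2)).fun_mul (Real.hasDerivAt_exp x))
    refine this.congr_deriv ?_
    push_cast
    ring
  have h2 : HasDerivAt (fun x : ℝ => ((m : ℝ) + 2) * ((m : ℝ) + 1) * x ^ (m + 2) * Real.exp x)
      (((m : ℝ) + 2) * ((m : ℝ) + 1) * (((m : ℝ) + 2) * x ^ (m + 1)) * Real.exp x
        + ((m : ℝ) + 2) * ((m : ℝ) + 1) * x ^ (m + 2) * Real.exp x) x := by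
    have := (((hasDerivAt_pow (m + 2) x).const_mul (((m : ℝ) + 2) * ((m : ℝ) + 1))).fun_mul
      (Real.hasDerivAt_exp x))
    refine this.congr_deriv ?_
    push_cast
    ring
  have hP : HasDerivAt (fun x : ℝ => x ^ 2 + 2 * ((m : ℝ) + 1) * x + ((m : ℝ) + 2) * ((m : ℝ) + 1))
      (2 * x + 2 * ((m : ℝ) + 1)) x := by
    have := (((hasDerivAt_pow 2 x).fun_add
      ((hasDerivAt_id x).const_mul (2 * ((m : ℝ) + 1)))).add_const
      (((m : ℝ) + 2) * ((m : ℝ) + 1)))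
    refine this.congr_deriv ?_
    push_cast
    ring
  have h3 := hP.fun_mul (EE_hasDeriv m x)
  have h := (h1.fun_add h2).fun_sub h3
  refine h.congr_deriv ?_
  simp only [D1]
  ring

lemma D1_hasDeriv (m : ℕ) (x : ℝ) : HasDerivAt (D1 m) (D2 m x) x := by
  have h1 : HasDerivAt (fun x : ℝ => 2 * ((m : ℝ) + 2) * x ^ (m + 2) * Real.exp x)
      (2 * ((m : ℝ) + 2) * (((m : ℝ) + 2) * x ^ (m + 1)) * Real.exp x
        + 2 * ((m : ℝ) + 2) * x ^ (m + 2) * Real.exp x) x := by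
    have := (((hasDerivAt_pow (m + 2) x).const_mul (2 * ((m : ℝ) + 2))).fun_mul
      (Real.hasDerivAt_exp x))
    refine this.congr_deriv ?_
    push_cast
    ring
  have hP : HasDerivAt (fun x : ℝ => 2 * x + 2 * ((m : ℝ) + 1)) (2 : ℝ) x := by
    have := (((hasDerivAt_id x).const_mul (2 : ℝ)).add_const (2 * ((m : ℝ) + 1)))
    refine this.congr_deriv ?_
    ring
  have h := h1.fun_sub (hP.fun_mul (EE_hasDeriv m x))
  refine h.congr_deriv ?_
  simp only [D2]
  ring

lemma D2_hasDeriv (m : ℕ) (x : ℝ) :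
    HasDerivAt (D2 m) (2 * ((m : ℝ) + 2) * ((m : ℝ) + 1) * x ^ m * Real.exp x) x := by
  have h1 : HasDerivAt (fun x : ℝ => 2 * ((m : ℝ) + 2) * x ^ (m + 1) * Real.exp x)
      (2 * ((m : ℝ) + 2) * (((m : ℝ) + 1) * x ^ m) * Real.exp x
        + 2 * ((m : ℝ) + 2) * x ^ (m + 1) * Real.exp x) x := by
    have := (((hasDerivAt_pow (m + 1) x).const_mul (2 * ((m : ℝ) + 2))).fun_mul
      (Real.hasDerivAt_exp x))
    refine this.congr_deriv ?_
    push_cast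
    ring
  have h := h1.fun_sub ((EE_hasDeriv m x).const_mul (2 : ℝ))
  refine h.congr_deriv ?_
  ring

lemma aux_pos {f f' : ℝ → ℝ} (hd : ∀ x, HasDerivAt f (f' x) x)
    (h0 : f 0 = 0) (hp : ∀ x, 0 < x → 0 < f' x) : ∀ x, 0 < x → 0 < f x := by
  intro x hx
  have hmono : StrictMonoOn f (Set.Ici (0 : ℝ)) := by
    apply strictMonoOn_of_deriv_pos (convex_Ici 0)
    · exact Continuous.continuousOn (continuous_iff_continuousAt.2 fun y => (hd y).continuousAt)
    · intro y hy
      rw [interior_Ici] at hy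
      rw [(hd y).deriv]
      exact hp y hy
  have := hmono Set.self_mem_Ici (le_of_lt hx) hx
  rwa [h0] at this

theorem stmt_7 (n : ℕ) (hn : 2 ≤ n) (E c : ℝ → ℝ)
    (hE : ∀ x : ℝ, E x =
      (∑ k ∈ Finset.range n,
        (-1 : ℝ) ^ (n - k - 1) * ((n.factorial : ℝ) / (k.factorial : ℝ)) * x ^ k * Real.exp x)
        - (-1 : ℝ) ^ (n - 1) * (n.factorial : ℝ))
    (hc : ∀ x : ℝ, c x =
      (n : ℝ) * x ^ (n + 1) * Real.exp x + (n : ℝ) * ((n : ℝ) - 1) * x ^ n * Real.exp x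
        - (x ^ 2 + 2 * ((n : ℝ) - 1) * x + (n : ℝ) * ((n : ℝ) - 1)) * E x) :
    c 0 = 0 ∧ deriv c 0 = 0 ∧ iteratedDeriv 2 c 0 = 0 ∧
      (∀ x : ℝ, iteratedDeriv 3 c x =
        2 * (n : ℝ) * ((n : ℝ) - 1) * x ^ (n - 2) * Real.exp x) ∧
      ∀ x : ℝ, 0 < x → 0 < c x := by
  obtain ⟨m, rfl⟩ : ∃ m, n = m + 2 := ⟨n - 2, by omega⟩
  have hE2 : E = EE m := by
    funext x
    rw [hE x, EE]
    rw [Finset.sum_mul]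
    rfl
  subst hE2
  have hc2 : c = CC m := by
    funext x
    rw [hc x, CC]
    have h1 : m + 2 + 1 = m + 3 := by omega
    rw [h1]
    push_cast
    ring
  subst hc2
  have hd1 : deriv (CC m) = D1 m := funext fun x => (CC_hasDeriv m x).deriv
  have hd2 : deriv (D1 m) = D2 m := funext fun x => (D1_hasDeriv m x).deriv
  have hd3 : deriv (D2 m) = fun x => 2 * ((m : ℝ) + 2) * ((m : ℝ) + 1) * x ^ m * Real.exp x :=
    funext fun x => (D2_hasDeriv m x).deriv
  have hC0 : CC m 0 = 0 := by
    simp [CC, EE_zero m]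
  have hD10 : D1 m 0 = 0 := by
    simp [D1, EE_zero m]
  have hD20 : D2 m 0 = 0 := by
    simp [D2, EE_zero m]
  refine ⟨hC0, ?_, ?_, ?_, ?_⟩
  · rw [hd1, hD10]
  · rw [show (2 : ℕ) = 1 + 1 from rfl, iteratedDeriv_succ, iteratedDeriv_one, hd1, hd2, hD20]
  · intro x
    rw [show (3 : ℕ) = 1 + 1 + 1 from rfl, iteratedDeriv_succ, iteratedDeriv_succ,
      iteratedDeriv_one, hd1, hd2, hd3]
    have : m + 2 - 2 = m := by omega
    rw [this]
    push_cast
    ring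
  · have p2 : ∀ x, 0 < x → 0 < D2 m x := by
      apply aux_pos (D2_hasDeriv m) hD20
      intro x hx
      positivity
    have p1 : ∀ x, 0 < x → 0 < D1 m x :=
      aux_pos (D1_hasDeriv m) hD10 p2
    exact aux_pos (CC_hasDeriv m) hC0 p1
end

section
/- If φ : ℝ → (0,∞) is a smooth increasing solution of φ^{n-1} φ' e^φ = e^{nt} with φ → 0 as t → -∞ and n ≥ 1, then the function ρ(t) = ∫_{-∞}^t √(φ'(τ)) dτ is finite for all t and satisfies ρ(t)/t → √n as t → ∞; in particular ρ(t) → ∞, so ρ = O(t). -/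
open Filter Real MeasureTheory Set intervalIntegral

noncomputable def Fa (m : ℕ) (u : ℝ) : ℝ := ∫ s in (0:ℝ)..u, s ^ m * Real.exp s

lemma Fa_cont (m : ℕ) : Continuous fun s : ℝ => s ^ m * Real.exp s := by continuity

lemma Fa_hasDerivAt (m : ℕ) (x : ℝ) : HasDerivAt (Fa m) (x ^ m * Real.exp x) x := by
  exact ((Fa_cont m).integral_hasStrictDerivAt 0 x).hasDerivAt

lemma Fa_continuous (m : ℕ) : Continuous (Fa m) := by
  have : Differentiable ℝ (Fa m) := fun x => (Fa_hasDerivAt m x).differentiableAt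
  exact this.continuous

lemma Fa_zero (m : ℕ) : Fa m 0 = 0 := by simp [Fa]

-- lower bound: u^(m+1)/(m+1) ≤ Fa m u for u ≥ 0
lemma Fa_lb (m : ℕ) (u : ℝ) (hu : 0 ≤ u) : u ^ (m+1) / (m+1) ≤ Fa m u := by
  have h : ∫ s in (0:ℝ)..u, s ^ m = u ^ (m+1) / (m+1) := by
    simp [integral_pow]
  rw [← h]
  apply intervalIntegral.integral_mono_on hu
  · exact (continuous_pow m).intervalIntegrable _ _
  · exact (Fa_cont m).intervalIntegrable _ _
  · intro x hx
    nlinarith [Real.one_le_exp hx.1, pow_nonneg hx.1 m]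

-- upper bound: Fa m u ≤ u^(m+1)/(m+1) * exp u  for u ≥ 0
lemma Fa_ub (m : ℕ) (u : ℝ) (hu : 0 ≤ u) : Fa m u ≤ exp u * u ^ (m+1) / (m+1) := by
  have h : ∫ s in (0:ℝ)..u, exp u * s ^ m = exp u * u ^ (m+1) / (m+1) := by
    rw [intervalIntegral.integral_const_mul]
    simp [integral_pow]; ring
  rw [← h]
  apply intervalIntegral.integral_mono_on hu
  · exact (Fa_cont m).intervalIntegrable _ _
  · exact (continuous_const.mul (continuous_pow m)).intervalIntegrable _ _
  · intro x hx
    have := Real.exp_le_exp.mpr hx.2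
    nlinarith [pow_nonneg hx.1 m]

lemma Fa_nonneg (m : ℕ) (u : ℝ) (hu : 0 ≤ u) : 0 ≤ Fa m u :=
  le_trans (by positivity) (Fa_lb m u hu)

lemma Fa_ibp (m : ℕ) (u : ℝ) (hu : 0 ≤ u) :
    Fa m u + m * Fa (m-1) u = u ^ m * Real.exp u - 0 ^ m := by
  have hderiv : ∀ x ∈ Set.uIcc (0:ℝ) u, HasDerivAt (fun s => s ^ m * Real.exp s)
      (x ^ m * Real.exp x + (m : ℝ) * x ^ (m-1) * Real.exp x) x := by
    intro x _
    have h1 := (hasDerivAt_pow m x).mul (Real.hasDerivAt_exp x)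
    exact h1.congr_deriv (by ring)
  have hint : IntervalIntegrable (fun x : ℝ => x ^ m * Real.exp x + (m : ℝ) * x ^ (m-1) * Real.exp x)
      volume 0 u := by
    apply Continuous.intervalIntegrable; continuity
  have h := intervalIntegral.integral_eq_sub_of_hasDerivAt hderiv hint
  rw [intervalIntegral.integral_add ((Fa_cont m).intervalIntegrable _ _)
      (by apply Continuous.intervalIntegrable; continuity)] at h
  have h2 : ∫ x in (0:ℝ)..u, (m : ℝ) * x ^ (m-1) * Real.exp x = m * Fa (m-1) u := by
    rw [Fa, ← intervalIntegral.integral_const_mul]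
    congr 1; ext x; ring
  rw [h2] at h
  simpa [Fa] using h

lemma Fa_upper (m : ℕ) (u : ℝ) (hu : 0 ≤ u) : Fa m u ≤ u ^ m * Real.exp u := by
  have h := Fa_ibp m u hu
  have h1 : (0:ℝ) ≤ 0 ^ m := by positivity
  have h2 : (0:ℝ) ≤ (m : ℝ) * Fa (m-1) u := by
    have := Fa_nonneg (m-1) u hu; positivity
  linarith

lemma Fa_aux_ub (k : ℕ) (u : ℝ) (hu : 0 ≤ u) : Fa k u ≤ u ^ k * (Real.exp u - 1) := by
  have h : ∫ s in (0:ℝ)..u, u ^ k * Real.exp s = u ^ k * (Real.exp u - 1) := by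
    rw [intervalIntegral.integral_const_mul, integral_exp]; simp
  rw [← h]
  apply intervalIntegral.integral_mono_on hu
  · exact (Fa_cont k).intervalIntegrable _ _
  · exact (continuous_const.mul Real.continuous_exp).intervalIntegrable _ _
  · intro x hx
    have h1 : x ^ k ≤ u ^ k := pow_le_pow_left₀ hx.1 hx.2 k
    nlinarith [Real.exp_pos x]

lemma Fa_lower (m : ℕ) (u : ℝ) (hu : 1 ≤ u) :
    u ^ m * Real.exp u * (1 - (m+1)/u) ≤ Fa m u := by
  have hu0 : (0:ℝ) < u := lt_of_lt_of_le one_pos hu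
  have h := Fa_ibp m u hu0.le
  rcases Nat.eq_zero_or_pos m with hm | hm
  · subst hm
    simp only [Nat.cast_zero, zero_mul, add_zero, pow_zero, one_mul, zero_add] at h ⊢
    have hexp : u ≤ Real.exp u := Real.add_one_le_exp u |>.trans' (by linarith)
    have h2 : Real.exp u * (1/u) ≥ 1 := by
      rw [ge_iff_le, mul_one_div, le_div_iff₀ hu0, one_mul]
      exact hexp
    nlinarith [Real.exp_pos u]
  · have hpow : u ^ m = u ^ (m-1) * u := by
      rw [← pow_succ, Nat.sub_add_cancel hm]
    have hz : (0:ℝ) ^ m = 0 := zero_pow (Nat.pos_iff_ne_zero.mp hm)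
    rw [hz, sub_zero] at h
    have haux : Fa (m-1) u ≤ u ^ (m-1) * (Real.exp u - 1) := Fa_aux_ub (m-1) u hu0.le
    have hm1 : (1:ℝ) ≤ (m:ℝ) := by exact_mod_cast hm
    have hupos : (0:ℝ) < u ^ (m-1) := pow_pos hu0 _
    have key : u ^ m * Real.exp u * ((m:ℝ)/u) ≥ (m:ℝ) * Fa (m-1) u := by
      rw [hpow]
      have : u ^ (m-1) * u * Real.exp u * ((m:ℝ)/u) = (m:ℝ) * (u ^ (m-1) * Real.exp u) := by
        field_simp
      rw [this]
      have : Fa (m-1) u ≤ u ^ (m-1) * Real.exp u := by nlinarith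
      nlinarith
    have h1 : (m:ℝ)/u ≤ ((m:ℝ)+1)/u := by
      gcongr; linarith
    have hfrac : u ^ m * Real.exp u * ((m:ℝ)/u) ≤ u ^ m * Real.exp u * ((↑m+1)/u) :=
      mul_le_mul_of_nonneg_left h1 (by positivity)
    nlinarith [Real.exp_pos u, pow_pos hu0 m]

lemma int_exp_half (c : ℝ) : IntegrableOn (fun τ => Real.exp (τ/2)) (Set.Iic c) := by
  refine integrableOn_Iic_of_intervalIntegral_norm_bounded (2 * Real.exp (c/2)) c
    (fun y => ((Real.continuous_exp.comp (continuous_id.div_const 2)).integrableOn_Ioc))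
    tendsto_id (Eventually.of_forall fun y => ?_)
  have hder : ∀ x ∈ Set.uIcc y c, HasDerivAt (fun s : ℝ => 2 * Real.exp (s/2)) (Real.exp (x/2)) x := by
    intro x _
    have := ((Real.hasDerivAt_exp (x/2)).comp x ((hasDerivAt_id x).div_const 2)).const_mul 2
    exact this.congr_deriv (by ring)
  have hint : IntervalIntegrable (fun s : ℝ => Real.exp (s/2)) volume y c :=
    (Real.continuous_exp.comp (continuous_id.div_const 2)).intervalIntegrable _ _
  have h := intervalIntegral.integral_eq_sub_of_hasDerivAt hder hint
  calc ∫ x in y..c, ‖Real.exp (x/2)‖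
      = ∫ x in y..c, Real.exp (x/2) := by
        congr 1; ext x; exact norm_of_nonneg (Real.exp_pos _).le
    _ = 2 * Real.exp (c/2) - 2 * Real.exp (y/2) := h
    _ ≤ 2 * Real.exp (c/2) := by nlinarith [Real.exp_pos (y/2)]

lemma Fa_mono (m : ℕ) {u v : ℝ} (hu : 0 ≤ u) (huv : u ≤ v) : Fa m u ≤ Fa m v := by
  have h : Fa m v - Fa m u = ∫ s in u..v, s ^ m * Real.exp s := by
    rw [Fa, Fa, ← intervalIntegral.integral_add_adjacent_intervals
      ((Fa_cont m).intervalIntegrable 0 u) ((Fa_cont m).intervalIntegrable u v)]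
    ring
  have h2 : 0 ≤ ∫ s in u..v, s ^ m * Real.exp s := by
    apply intervalIntegral.integral_nonneg huv
    intro x hx
    have : 0 ≤ x := le_trans hu hx.1
    positivity
  linarith

/-- If `φ : ℝ → (0,∞)` is a smooth increasing solution of
`φ^{n-1} φ' e^φ = e^{nt}` with `φ → 0` as `t → -∞` and `n ≥ 1`, then
`ρ(t) = ∫_{-∞}^t √(φ'(τ)) dτ` is finite for all `t` and `ρ(t)/t → √n` as `t → ∞`
(in particular `ρ(t) → ∞`, so `ρ = O(t)`). -/
theorem stmt_8 (n : ℕ) (hn : 1 ≤ n) (φ : ℝ → ℝ)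
    (hpos : ∀ t, 0 < φ t) (hsmooth : ContDiff ℝ (⊤ : ℕ∞) φ) (hmono : StrictMono φ)
    (hode : ∀ t : ℝ, φ t ^ (n - 1) * deriv φ t * Real.exp (φ t) = Real.exp (n * t))
    (hlim : Tendsto φ atBot (nhds 0)) :
    (∀ t : ℝ, IntegrableOn (fun τ => Real.sqrt (deriv φ τ)) (Set.Iic t)) ∧
      Tendsto (fun t => (∫ τ in Set.Iic t, Real.sqrt (deriv φ τ)) / t) atTop
        (nhds (Real.sqrt n)) ∧
      Tendsto (fun t => ∫ τ in Set.Iic t, Real.sqrt (deriv φ τ)) atTop atTop := by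
  set m := n - 1 with hm
  have hmn : m + 1 = n := Nat.sub_add_cancel hn
  have hnpos : (0:ℝ) < n := by exact_mod_cast hn
  have hψcont : Continuous (deriv φ) := hsmooth.continuous_deriv (by simp)
  have hφdiff : Differentiable ℝ φ := hsmooth.differentiable (by simp)
  have hprodpos : ∀ t, 0 < φ t ^ m * Real.exp (φ t) := fun t => mul_pos (pow_pos (hpos t) m) (Real.exp_pos _)
  have hψ : ∀ t, deriv φ t = Real.exp (n * t) / (φ t ^ m * Real.exp (φ t)) := by
    intro t
    rw [eq_div_iff (hprodpos t).ne']
    linarith [hode t]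
  have hψpos : ∀ t, 0 < deriv φ t := fun t => by
    rw [hψ t]; exact div_pos (Real.exp_pos _) (hprodpos t)
  -- key identity
  have hkey : ∀ t, (n:ℝ) * Fa m (φ t) = Real.exp (n * t) := by
    set g : ℝ → ℝ := fun t => (n:ℝ) * Fa m (φ t) - Real.exp (n * t) with hg
    have hg' : ∀ t, HasDerivAt g 0 t := by
      intro t
      have h1 : HasDerivAt (fun t => Fa m (φ t)) (φ t ^ m * Real.exp (φ t) * deriv φ t) t :=
        (Fa_hasDerivAt m (φ t)).comp t (hφdiff t).hasDerivAt
      have h2 : HasDerivAt (fun t : ℝ => Real.exp (n * t)) ((n:ℝ) * Real.exp (n * t)) t := by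
        have := (Real.hasDerivAt_exp ((n:ℝ) * t)).comp t ((hasDerivAt_id t).const_mul (n:ℝ))
        exact this.congr_deriv (by ring)
      have h3 := (h1.const_mul (n:ℝ)).sub h2
      refine h3.congr_deriv ?_
      rw [← hode t]
      ring
    have hconst : ∀ t, g t = g 0 :=
      fun t => is_const_of_deriv_eq_zero (fun x => (hg' x).differentiableAt)
        (fun x => (hg' x).deriv) t 0
    have hbot : Tendsto g atBot (nhds 0) := by
      have h1 : Tendsto (fun t => Fa m (φ t)) atBot (nhds 0) := by
        have := ((Fa_continuous m).tendsto 0).comp hlim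
        rwa [Fa_zero] at this
      have h2 : Tendsto (fun t : ℝ => Real.exp ((n:ℝ) * t)) atBot (nhds 0) := by
        apply Real.tendsto_exp_atBot.comp
        exact (tendsto_const_mul_atBot_of_pos hnpos).mpr tendsto_id
      have := (h1.const_mul (n:ℝ)).sub h2
      simpa using this
    have hg0 : g 0 = 0 := by
      have : Tendsto g atBot (nhds (g 0)) := by
        have : g = fun _ => g 0 := funext hconst
        rw [this]; exact tendsto_const_nhds
      exact tendsto_nhds_unique this hbot
    intro t
    have := hconst t
    rw [hg0] at this
    have : (n:ℝ) * Fa m (φ t) - Real.exp ((n:ℝ) * t) = 0 := this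
    linarith
  -- φ ≤ exp
  have hφle : ∀ t, φ t ≤ Real.exp t := by
    intro t
    have h1 := Fa_lb m (φ t) (hpos t).le
    have h2 : (φ t) ^ n ≤ Real.exp (n * t) := by
      rw [← hkey t]
      have : ((m:ℝ)+1) = (n:ℝ) := by exact_mod_cast hmn
      rw [← hmn]
      rw [div_le_iff₀ (by positivity : (0:ℝ) < (m:ℝ)+1)] at h1
      calc φ t ^ (m+1) ≤ Fa m (φ t) * ((m:ℝ)+1) := h1
        _ = ((m+1:ℕ):ℝ) * Fa m (φ t) := by push_cast; ring
    have h3 : (φ t) ^ n ≤ Real.exp t ^ n := by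
      rw [← Real.exp_nat_mul]; exact h2
    exact le_of_pow_le_pow_left₀ (by omega) (Real.exp_pos t).le h3
  -- deriv φ ≤ φ ≤ exp
  have hψle : ∀ t, deriv φ t ≤ Real.exp t := by
    intro t
    have hub := Fa_ub m (φ t) (hpos t).le
    have h2 : Real.exp (n * t) ≤ φ t ^ m * Real.exp (φ t) * φ t := by
      rw [← hkey t, ← hmn]
      push_cast
      rw [le_div_iff₀ (by positivity : (0:ℝ) < (m:ℝ)+1)] at hub
      calc ((m:ℝ)+1) * Fa m (φ t) ≤ Real.exp (φ t) * φ t ^ (m+1) := by linarith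
        _ = φ t ^ m * Real.exp (φ t) * φ t := by rw [pow_succ]; ring
    have := hψ t
    rw [this, div_le_iff₀ (hprodpos t)]
    calc Real.exp (n*t) ≤ φ t ^ m * Real.exp (φ t) * φ t := h2
      _ ≤ Real.exp t * (φ t ^ m * Real.exp (φ t)) := by nlinarith [hφle t, hprodpos t]
  -- integrability
  have hInt : ∀ t : ℝ, IntegrableOn (fun τ => Real.sqrt (deriv φ τ)) (Set.Iic t) := by
    intro t
    refine ((int_exp_half t).mono' ((continuous_sqrt.comp hψcont).aestronglyMeasurable) ?_)
    filter_upwards with τ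
    rw [norm_of_nonneg (Real.sqrt_nonneg _), Real.exp_half]
    exact Real.sqrt_le_sqrt (hψle τ)
  -- φ → ∞
  have hφtop : Tendsto φ atTop atTop := by
    apply tendsto_atTop_atTop_of_monotone hmono.monotone
    intro b
    by_contra hb
    push_neg at hb
    set B := max b 1 with hB
    have hfa : ∀ a : ℝ, Real.exp ((n:ℝ) * a) ≤ (n:ℝ) * Fa m B := by
      intro a
      rw [← hkey a]
      have : φ a ≤ B := le_trans (hb a).le (le_max_left _ _)
      exact mul_le_mul_of_nonneg_left (Fa_mono m (hpos a).le this) hnpos.le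
    have htop : Tendsto (fun a : ℝ => Real.exp ((n:ℝ) * a)) atTop atTop :=
      Real.tendsto_exp_atTop.comp ((tendsto_const_mul_atTop_of_pos hnpos).mpr tendsto_id)
    obtain ⟨a, ha⟩ := (htop.eventually_gt_atTop ((n:ℝ) * Fa m B)).exists
    exact absurd (hfa a) (not_le.mpr ha)
  -- deriv φ → n
  have hψlim : Tendsto (deriv φ) atTop (nhds (n:ℝ)) := by
    have hnm : ((m:ℝ) + 1) = (n:ℝ) := by exact_mod_cast hmn
    have hLlim : Tendsto (fun t => (n:ℝ) * (1 - (n:ℝ)/φ t)) atTop (nhds (n:ℝ)) := by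
      have h0 : Tendsto (fun t => (n:ℝ)/φ t) atTop (nhds 0) :=
        tendsto_const_nhds.div_atTop hφtop
      have h1 : Tendsto (fun t => (1:ℝ) - (n:ℝ)/φ t) atTop (nhds (1 - 0)) :=
        (tendsto_const_nhds : Tendsto (fun _ : ℝ => (1:ℝ)) atTop (nhds 1)).sub h0
      have h2 := h1.const_mul (n:ℝ)
      simpa using h2
    apply tendsto_of_tendsto_of_tendsto_of_le_of_le' hLlim tendsto_const_nhds
    · filter_upwards [hφtop.eventually_ge_atTop 1] with t ht
      have hlow := Fa_lower m (φ t) ht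
      rw [hnm] at hlow
      rw [hψ t, ← hkey t, le_div_iff₀ (hprodpos t)]
      calc (n:ℝ) * (1 - (n:ℝ)/φ t) * (φ t ^ m * Real.exp (φ t))
          = (n:ℝ) * (φ t ^ m * Real.exp (φ t) * (1 - (n:ℝ)/φ t)) := by ring
        _ ≤ (n:ℝ) * Fa m (φ t) := mul_le_mul_of_nonneg_left hlow hnpos.le
    · filter_upwards [hφtop.eventually_ge_atTop 1] with t ht
      have hup := Fa_upper m (φ t) (by linarith : (0:ℝ) ≤ φ t)
      rw [hψ t, ← hkey t, div_le_iff₀ (hprodpos t)]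
      calc (n:ℝ) * Fa m (φ t) ≤ (n:ℝ) * (φ t ^ m * Real.exp (φ t)) :=
            mul_le_mul_of_nonneg_left hup hnpos.le
        _ = (n:ℝ) * (φ t ^ m * Real.exp (φ t)) := rfl
  -- sqrt deriv φ → sqrt n
  have hsq : Tendsto (fun t => Real.sqrt (deriv φ t)) atTop (nhds (Real.sqrt n)) :=
    (Real.continuous_sqrt.tendsto _).comp hψlim
  -- main limit
  set ρ : ℝ → ℝ := fun t => ∫ τ in Set.Iic t, Real.sqrt (deriv φ τ) with hρ
  set sn : ℝ := Real.sqrt n with hsn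
  have hIntInterval : ∀ a b : ℝ, IntervalIntegrable (fun τ => Real.sqrt (deriv φ τ)) volume a b :=
    fun a b => (continuous_sqrt.comp hψcont).intervalIntegrable a b
  have hmain : Tendsto (fun t => ρ t / t) atTop (nhds sn) := by
    rw [Metric.tendsto_atTop]
    intro ε hε
    obtain ⟨T₀, hT₀⟩ := Metric.tendsto_atTop.mp hsq (ε/2) (by linarith)
    set T : ℝ := max T₀ 0 with hT
    have hTnn : 0 ≤ T := le_max_right _ _
    have hbound : ∀ τ, T ≤ τ → |Real.sqrt (deriv φ τ) - sn| ≤ ε/2 := by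
      intro τ hτ
      have := hT₀ τ (le_trans (le_max_left _ _) hτ)
      rw [Real.dist_eq] at this
      exact this.le
    set C : ℝ := |ρ T - sn * T| with hC
    have hCnn : 0 ≤ C := abs_nonneg _
    refine ⟨max (max T 1) (2*(C+1)/ε), fun t ht => ?_⟩
    have hTt : T ≤ t := le_trans (le_trans (le_max_left _ _) (le_max_left _ _)) ht
    have h1t : (1:ℝ) ≤ t := le_trans (le_trans (le_max_right _ _) (le_max_left _ _)) ht
    have hCt : 2*(C+1)/ε ≤ t := le_trans (le_max_right _ _) ht
    have ht0 : (0:ℝ) < t := lt_of_lt_of_le one_pos h1t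
    have hsplit : ρ t - ρ T = ∫ τ in T..t, Real.sqrt (deriv φ τ) :=
      integral_Iic_sub_Iic (hInt T) (hInt t)
    have hconst : ∫ τ in T..t, sn = (t - T) * sn := by
      rw [intervalIntegral.integral_const, smul_eq_mul]
    have hdiff : (∫ τ in T..t, Real.sqrt (deriv φ τ)) - (t - T) * sn
        = ∫ τ in T..t, (Real.sqrt (deriv φ τ) - sn) := by
      rw [intervalIntegral.integral_sub (hIntInterval T t)
        (intervalIntegrable_const), hconst]
    have hbd : |(∫ τ in T..t, (Real.sqrt (deriv φ τ) - sn))| ≤ ε/2 * |t - T| := by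
      rw [← Real.norm_eq_abs]
      apply intervalIntegral.norm_integral_le_of_norm_le_const
      intro x hx
      rw [Set.uIoc_of_le hTt] at hx
      rw [Real.norm_eq_abs]
      exact hbound x hx.1.le
    rw [abs_of_nonneg (sub_nonneg.mpr hTt)] at hbd
    have hkey2 : |ρ t - sn * t| ≤ C + ε/2 * t := by
      have e1 : ρ t - sn * t = (ρ T - sn * T) + ((∫ τ in T..t, Real.sqrt (deriv φ τ)) - (t - T) * sn) := by
        rw [← hsplit]; ring
      rw [e1]
      calc |(ρ T - sn * T) + ((∫ τ in T..t, Real.sqrt (deriv φ τ)) - (t - T) * sn)|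
          ≤ |ρ T - sn * T| + |(∫ τ in T..t, Real.sqrt (deriv φ τ)) - (t - T) * sn| := abs_add_le _ _
        _ ≤ C + ε/2 * (t - T) := by rw [hdiff]; exact add_le_add le_rfl hbd
        _ ≤ C + ε/2 * t := by nlinarith
    rw [Real.dist_eq]
    have e2 : ρ t / t - sn = (ρ t - sn * t) / t := by field_simp
    rw [e2, abs_div, abs_of_pos ht0]
    calc |ρ t - sn * t| / t ≤ (C + ε/2*t) / t := by gcongr
      _ = C/t + ε/2 := by rw [add_div, mul_div_assoc, div_self ht0.ne', mul_one]
      _ < ε/2 + ε/2 := by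
          have h5 : 2*(C+1) ≤ t * ε := (div_le_iff₀ hε).mp hCt
          have : C/t < ε/2 := by rw [div_lt_iff₀ ht0]; nlinarith
          linarith
      _ = ε := by ring
  refine ⟨hInt, hmain, ?_⟩
  have hsqn : 0 < Real.sqrt n := Real.sqrt_pos.mpr hnpos
  have := (tendsto_id.atTop_mul_pos hsqn hmain : Tendsto (fun t : ℝ => t * ((∫ τ in Set.Iic t, Real.sqrt (deriv φ τ)) / t)) atTop atTop)
  refine this.congr' ?_
  filter_upwards [eventually_gt_atTop (0:ℝ)] with t ht
  field_simp
  rfl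
end

section
/- Let n ≥ 2 and a > 0. The function F(φ) = ∑_{j=0}^{n-1} (-1)^{n-j-1} (n!/j!) φ^j e^φ is strictly increasing on (a, ∞), and hence for C = ∑_{j=0}^{n-1} (-1)^{n-j-1} (n!/j!) a^j e^a, the equation F(φ) = e^{nt} + C has for each t ∈ ℝ a unique solution φ(t) > a, with φ(t) → a as t → -∞. -/
open Finset Filter Real

/-!
Writing `F = Fₙ`, the sums satisfy `Fₙ₊₁ = (n + 1) (xⁿ eˣ - Fₙ)`, so by induction
`Fₙ' = n xⁿ⁻¹ eˣ`, which is positive for `x > 0`. Hence `F` is strictly increasing on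
`[0, ∞)`, and since `F' ≥ 1` on `[1, ∞)` it tends to `∞`; the intermediate value theorem then
gives a unique `φ(t) > a` with `F φ(t) = F a + e^{nt}`. As `t → -∞` we get `F φ(t) → F a`, and
strict monotonicity forces `φ(t) → a`.
-/

noncomputable def primitivePowExp (n : ℕ) (x : ℝ) : ℝ :=
  ∑ j ∈ range n, (-1 : ℝ) ^ (n - j - 1) * ((n.factorial : ℝ) / j.factorial) * x ^ j * exp x

lemma primitivePowExp_zero : primitivePowExp 0 = 0 := by
  ext x
  simp [primitivePowExp]

lemma primitivePowExp_succ (n : ℕ) (x : ℝ) :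
    primitivePowExp (n + 1) x = (n + 1) * (x ^ n * exp x - primitivePowExp n x) := by
  have lower : ∀ j ∈ range n,
      (-1 : ℝ) ^ (n + 1 - j - 1) * (((n + 1).factorial : ℝ) / j.factorial) * x ^ j * exp x
        = -((n + 1) * ((-1 : ℝ) ^ (n - j - 1) * ((n.factorial : ℝ) / j.factorial)
            * x ^ j * exp x)) := by
    intro j hj
    rw [show n + 1 - j - 1 = n - j - 1 + 1 by grind, pow_succ, Nat.factorial_succ]
    push_cast
    ring
  have top : ((n + 1).factorial : ℝ) / n.factorial = n + 1 := by
    rw [Nat.factorial_succ]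
    push_cast
    field_simp
  rw [primitivePowExp, sum_range_succ, sum_congr rfl lower, sum_neg_distrib, ← mul_sum,
    show n + 1 - n - 1 = 0 by omega, top, primitivePowExp]
  ring

lemma hasDerivAt_primitivePowExp (n : ℕ) (x : ℝ) :
    HasDerivAt (primitivePowExp n) (n * x ^ (n - 1) * exp x) x := by
  induction n with
  | zero => simp [primitivePowExp_zero]
  | succ n ih =>
    rw [show primitivePowExp (n + 1) = fun y ↦ (n + 1) * (y ^ n * exp y - primitivePowExp n y)
      from funext (primitivePowExp_succ n)]
    refine ((((hasDerivAt_pow n x).fun_mul (hasDerivAt_exp x)).fun_sub ih).const_mul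
      ((n : ℝ) + 1)).congr_deriv ?_
    rw [Nat.add_sub_cancel]
    push_cast
    ring

lemma continuous_primitivePowExp (n : ℕ) : Continuous (primitivePowExp n) :=
  continuous_iff_continuousAt.2 fun x ↦ (hasDerivAt_primitivePowExp n x).continuousAt

lemma strictMonoOn_primitivePowExp {n : ℕ} (hn : 0 < n) :
    StrictMonoOn (primitivePowExp n) (Set.Ici 0) := by
  refine strictMonoOn_of_deriv_pos (convex_Ici 0) (continuous_primitivePowExp n).continuousOn
    fun x hx ↦ ?_
  rw [interior_Ici, Set.mem_Ioi] at hx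
  rw [(hasDerivAt_primitivePowExp n x).deriv]
  positivity

lemma tendsto_primitivePowExp_atTop {n : ℕ} (hn : 0 < n) :
    Tendsto (primitivePowExp n) atTop atTop := by
  have deriv_ge_one : ∀ x ∈ interior (Set.Ici (1 : ℝ)), 1 ≤ deriv (primitivePowExp n) x := by
    intro x hx
    rw [interior_Ici, Set.mem_Ioi] at hx
    rw [(hasDerivAt_primitivePowExp n x).deriv]
    exact one_le_mul_of_one_le_of_one_le
      (one_le_mul_of_one_le_of_one_le (by exact_mod_cast hn) (one_le_pow₀ hx.le))
      (one_le_exp (zero_le_one.trans hx.le))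
  have linear_bound : ∀ x ≥ 1, primitivePowExp n 1 - 1 + x ≤ primitivePowExp n x := by
    intro x hx
    have := (convex_Ici 1).mul_sub_le_image_sub_of_le_deriv
      (continuous_primitivePowExp n).continuousOn
      (fun y _ ↦ (hasDerivAt_primitivePowExp n y).differentiableAt.differentiableWithinAt)
      deriv_ge_one 1 Set.self_mem_Ici x hx hx
    linarith
  exact tendsto_atTop_mono' atTop (eventually_ge_atTop 1 |>.mono linear_bound)
    (tendsto_atTop_add_const_left atTop _ tendsto_id)

lemma StrictMonoOn.existsUnique_mem_Ioi_eq {f : ℝ → ℝ} {a y : ℝ}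
    (hf : StrictMonoOn f (Set.Ici a)) (hc : Continuous f) (htop : Tendsto f atTop atTop)
    (hy : f a < y) : ∃! p, p ∈ Set.Ioi a ∧ f p = y := by
  obtain ⟨b, hyb, hab⟩ := ((htop.eventually_gt_atTop y).and (eventually_ge_atTop a)).exists
  obtain ⟨p, ⟨hap, -⟩, hfp⟩ := intermediate_value_Ioo hab hc.continuousOn ⟨hy, hyb⟩
  refine ⟨p, ⟨hap, hfp⟩, fun q ⟨haq, hfq⟩ ↦ ?_⟩
  exact hf.injOn (Set.mem_Ici_of_Ioi haq) (Set.mem_Ici_of_Ioi hap) (hfq.trans hfp.symm)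

lemma StrictMonoOn.tendsto_of_tendsto_comp {α : Type*} {l : Filter α} {f : ℝ → ℝ} {a : ℝ}
    {ψ : α → ℝ} (hf : StrictMonoOn f (Set.Ici a)) (hψ : ∀ t, a < ψ t)
    (hfψ : Tendsto (f ∘ ψ) l (nhds (f a))) : Tendsto ψ l (nhds a) := by
  refine tendsto_order.2 ⟨fun b hb ↦ .of_forall fun t ↦ hb.trans (hψ t), fun b hb ↦ ?_⟩
  filter_upwards [hfψ.eventually_lt_const (hf Set.self_mem_Ici hb.le hb)] with t ht
  exact (hf.lt_iff_lt (Set.mem_Ici_of_Ioi (hψ t)) hb.le).1 ht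

/-- For `n ≥ 2` and `a > 0`, the function
`F φ = ∑_{j=0}^{n-1} (-1)^{n-j-1} (n!/j!) φ^j e^φ` is strictly increasing on
`(a,∞)`; hence, with `C = F a`, the equation `F φ = e^{nt} + C` has for each
`t` a unique solution `φ(t) > a`, and any such solution function tends to `a`
as `t → -∞`. -/
theorem stmt_10 (n : ℕ) (hn : 2 ≤ n) (a : ℝ) (ha : 0 < a) (F : ℝ → ℝ)
    (hF : ∀ x : ℝ, F x =
      ∑ j ∈ Finset.range n,
        (-1 : ℝ) ^ (n - j - 1) * ((n.factorial : ℝ) / (j.factorial : ℝ)) * x ^ j * Real.exp x) :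
    StrictMonoOn F (Set.Ioi a) ∧
      (∀ t : ℝ, ∃! p : ℝ, p ∈ Set.Ioi a ∧ F p = Real.exp (n * t) + F a) ∧
      ∀ ψ : ℝ → ℝ, (∀ t : ℝ, ψ t ∈ Set.Ioi a ∧ F (ψ t) = Real.exp (n * t) + F a) →
        Tendsto ψ atBot (nhds a) := by
  obtain rfl : F = primitivePowExp n := funext hF
  have hn₀ : 0 < n := by omega
  have hmono : StrictMonoOn (primitivePowExp n) (Set.Ici a) :=
    (strictMonoOn_primitivePowExp hn₀).mono (Set.Ici_subset_Ici.2 ha.le)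
  have hexp : Tendsto (fun t : ℝ ↦ exp (n * t)) atBot (nhds 0) :=
    tendsto_exp_atBot.comp (tendsto_id.const_mul_atBot (by positivity))
  refine ⟨hmono.mono Set.Ioi_subset_Ici_self, fun t ↦ ?_, fun ψ hψ ↦ ?_⟩
  · exact hmono.existsUnique_mem_Ioi_eq (continuous_primitivePowExp n)
      (tendsto_primitivePowExp_atTop hn₀) (lt_add_of_pos_left _ (exp_pos _))
  · refine hmono.tendsto_of_tendsto_comp (fun t ↦ (hψ t).1) ?_
    have hcomp : primitivePowExp n ∘ ψ = fun t ↦ exp (n * t) + primitivePowExp n a :=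
      funext fun t ↦ (hψ t).2
    simpa [hcomp] using hexp.add_const (primitivePowExp n a)
end

section
/- For integers n ≥ 2 and 1 ≤ k ≤ n-1, define h(x) = e^{2kx} · ∑_{j=0}^n (-1)^{n-j} (n!/j!) (n+k)^{j-1} (n+k-j) x^j - ∑_{j=0}^n (-1)^{n-j} (n!/j!) (n-k)^{j-1} (n-k-j) x^j. Then h^{(i)}(0) = 0 for all 0 ≤ i ≤ n. -/
open Finset Real

private lemma iter_add (f g : ℝ → ℝ) (i : ℕ) (x : ℝ) (hf : ContDiff ℝ (⊤ : ℕ∞) f)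
    (hg : ContDiff ℝ (⊤ : ℕ∞) g) :
    iteratedDeriv i (fun x => f x + g x) x = iteratedDeriv i f x + iteratedDeriv i g x := by
  simp only [← iteratedDerivWithin_univ]
  exact iteratedDerivWithin_add (Set.mem_univ x) uniqueDiffOn_univ
    ((hf.of_le (by exact_mod_cast le_top)).contDiffWithinAt) ((hg.of_le (by exact_mod_cast le_top)).contDiffWithinAt)

private lemma iter_cmul (c : ℝ) (f : ℝ → ℝ) (i : ℕ) (x : ℝ) (hf : ContDiff ℝ (⊤ : ℕ∞) f) :
    iteratedDeriv i (fun x => c * f x) x = c * iteratedDeriv i f x := by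
  simp only [← iteratedDerivWithin_univ]
  exact iteratedDerivWithin_const_mul (Set.mem_univ x) uniqueDiffOn_univ c
    ((hf.of_le (by exact_mod_cast le_top)).contDiffWithinAt)

private lemma iter_sum {ι : Type*} (s : Finset ι) (F : ι → ℝ → ℝ) (i : ℕ) (x : ℝ)
    (hF : ∀ j ∈ s, ContDiff ℝ (⊤ : ℕ∞) (F j)) :
    iteratedDeriv i (fun x => ∑ j ∈ s, F j x) x = ∑ j ∈ s, iteratedDeriv i (F j) x := by
  classical
  induction s using Finset.induction with
  | empty =>
    simp only [Finset.sum_empty]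
    induction i with
    | zero => simp
    | succ m ihm =>
      rw [iteratedDeriv_succ']
      simpa [deriv_const'] using ihm
  | @insert a s' hj ih =>
    simp only [Finset.sum_insert hj]
    rw [iter_add _ _ _ _ (hF a (Finset.mem_insert_self a s'))
      (ContDiff.sum fun j hjs => hF j (Finset.mem_insert_of_mem hjs)),
      ih fun j hjs => hF j (Finset.mem_insert_of_mem hjs)]

private lemma cd_exp_pow (c : ℝ) (m : ℕ) :
    ContDiff ℝ (⊤ : ℕ∞) (fun x : ℝ => Real.exp (c * x) * x ^ m) :=
  ((Real.contDiff_exp.comp (contDiff_const.mul contDiff_id)).mul (contDiff_id.pow m))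

private lemma arith_step (c : ℝ) (i j : ℕ) :
    (((i+1).choose j : ℝ)) * j.factorial * c ^ (i + 1 - j)
      = c * ((i.choose j : ℝ) * j.factorial * c ^ (i - j))
        + j * ((i.choose (j-1) : ℝ) * (j-1).factorial * c ^ (i - (j-1))) := by
  match j with
  | 0 => simp [pow_succ, mul_comm]
  | m + 1 =>
    rcases lt_or_ge i m with h | h
    · rw [Nat.choose_eq_zero_of_lt (by omega), Nat.choose_eq_zero_of_lt (by omega),
        Nat.choose_eq_zero_of_lt (by omega)]
      simp
    · rcases eq_or_lt_of_le h with rfl | h'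
      · simp only [Nat.add_sub_cancel, Nat.sub_self, Nat.choose_self,
          Nat.choose_eq_zero_of_lt (Nat.lt_succ_self m), pow_zero, Nat.cast_one,
          Nat.cast_zero, zero_mul, mul_zero, Nat.factorial_succ]
        push_cast
        ring
      · -- m + 1 ≤ i
        rw [Nat.choose_succ_succ i m]
        have e1 : i + 1 - (m+1) = i - m := by omega
        have e2 : i - (m+1) + 1 = i - m := by omega
        have e3 : m + 1 - 1 = m := by omega
        rw [e1, e3, ← e2, pow_succ]
        have hfac : ((m:ℝ)+1) * (m.factorial) = ((m+1).factorial : ℝ) := by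
          rw [Nat.factorial_succ]; push_cast; ring
        push_cast
        linear_combination (-((i.choose m : ℝ) * (c ^ (i - (m+1)) * c))) * hfac

private lemma key_deriv (c : ℝ) (i : ℕ) : ∀ j : ℕ,
    iteratedDeriv i (fun x => Real.exp (c * x) * x ^ j) 0
      = (i.choose j : ℝ) * j.factorial * c ^ (i - j) := by
  induction i with
  | zero =>
    intro j
    cases j <;> simp
  | succ i ih =>
    intro j
    rw [iteratedDeriv_succ']
    have hderiv : (deriv fun x => Real.exp (c * x) * x ^ j)
        = fun x => c * (Real.exp (c * x) * x ^ j)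
          + (j : ℝ) * (Real.exp (c * x) * x ^ (j - 1)) := by
      funext x
      have h1 : HasDerivAt (fun x : ℝ => Real.exp (c * x)) (c * Real.exp (c * x)) x := by
        convert ((hasDerivAt_id' x).const_mul c).exp using 1
        ring
      have h2 : HasDerivAt (fun x : ℝ => x ^ j) ((j : ℝ) * x ^ (j - 1)) x := by
        simpa using hasDerivAt_pow j x
      refine (h1.mul h2).deriv.trans ?_
      ring
    rw [hderiv, iter_add _ _ _ _ (contDiff_const.mul (cd_exp_pow c j))
      (contDiff_const.mul (cd_exp_pow c (j-1))),
      iter_cmul _ _ _ _ (cd_exp_pow c j), iter_cmul _ _ _ _ (cd_exp_pow c (j-1)),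
      ih j, ih (j-1)]
    exact (arith_step c i j).symm

private lemma bin1 (t a : ℝ) (i : ℕ) :
    ∑ j ∈ Finset.range (i+1), (i.choose j : ℝ) * t ^ (i - j) * a ^ j = (t + a) ^ i := by
  rw [add_comm t a, add_pow]
  exact Finset.sum_congr rfl fun j hj => by ring

private lemma bin2 (t a : ℝ) (i : ℕ) :
    ∑ j ∈ Finset.range (i+1), (i.choose j : ℝ) * t ^ (i - j) * ((j:ℝ) * a ^ j)
      = (i : ℝ) * a * (t + a) ^ (i - 1) := by
  cases i with
  | zero => simp
  | succ m' =>
    rw [Finset.sum_range_succ']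
    simp only [Nat.cast_zero, zero_mul, mul_zero, add_zero, Nat.add_sub_cancel]
    rw [← bin1 t a m', Finset.mul_sum]
    refine Finset.sum_congr rfl fun m hm => ?_
    have hc : ((m'+1).choose (m+1) : ℝ) * ((m:ℝ)+1) = ((m':ℝ)+1) * (m'.choose m : ℝ) := by
      exact_mod_cast (Nat.add_one_mul_choose_eq m' m).symm
    have e1 : m' + 1 - (m + 1) = m' - m := by omega
    rw [e1]
    push_cast
    linear_combination t ^ (m' - m) * a ^ (m+1) * hc

/-- coefficient -/
noncomputable def co (n : ℕ) (a : ℝ) (j : ℕ) : ℝ :=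
  (-1 : ℝ) ^ (n - j) * ((n.factorial : ℝ) / (j.factorial : ℝ)) * a ^ ((j : ℤ) - 1) * (a - j)

/-- For `n ≥ 2`, `1 ≤ k ≤ n-1`, the function
`h x = e^{2kx} ∑_{j=0}^n (-1)^{n-j} (n!/j!) (n+k)^{j-1} (n+k-j) x^j
     - ∑_{j=0}^n (-1)^{n-j} (n!/j!) (n-k)^{j-1} (n-k-j) x^j`
satisfies `h⁽ⁱ⁾(0) = 0` for all `0 ≤ i ≤ n`. -/
theorem stmt_11 (n k : ℕ) (hn : 2 ≤ n) (hk1 : 1 ≤ k) (hk2 : k ≤ n - 1) (h : ℝ → ℝ)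
    (hh : ∀ x : ℝ, h x =
      Real.exp (2 * k * x) *
        (∑ j ∈ Finset.range (n + 1),
          (-1 : ℝ) ^ (n - j) * ((n.factorial : ℝ) / (j.factorial : ℝ)) *
            ((n : ℝ) + k) ^ ((j : ℤ) - 1) * ((n : ℝ) + k - j) * x ^ j)
      - ∑ j ∈ Finset.range (n + 1),
          (-1 : ℝ) ^ (n - j) * ((n.factorial : ℝ) / (j.factorial : ℝ)) *
            ((n : ℝ) - k) ^ ((j : ℤ) - 1) * ((n : ℝ) - k - j) * x ^ j) :
    ∀ i : ℕ, i ≤ n → iteratedDeriv i h 0 = 0 := by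
  intro i hi
  set a : ℝ := (n : ℝ) + k with ha_def
  set b : ℝ := (n : ℝ) - k with hb_def
  have hkn : k + 1 ≤ n := by omega
  have hkr : (k : ℝ) + 1 ≤ (n : ℝ) := by exact_mod_cast hkn
  have ha : a ≠ 0 := by positivity
  have hb : (0:ℝ) < b := by simp only [hb_def]; linarith
  have hb' : b ≠ 0 := ne_of_gt hb
  -- rewrite h
  have hfun : h = fun x =>
      (∑ j ∈ Finset.range (n+1), co n a j * (Real.exp ((2*k : ℝ) * x) * x ^ j))
      - ∑ j ∈ Finset.range (n+1), co n b j * (Real.exp ((0:ℝ) * x) * x ^ j) := by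
    funext x
    rw [hh x, Finset.mul_sum]
    congr 1
    · exact Finset.sum_congr rfl fun j hj => by unfold co; push_cast; ring
    · exact Finset.sum_congr rfl fun j hj => by
        unfold co; rw [zero_mul, Real.exp_zero]; ring
  rw [hfun]
  have cdS : ∀ (c : ℝ) (B : ℕ → ℝ), ContDiff ℝ (⊤ : ℕ∞)
      (fun x : ℝ => ∑ j ∈ Finset.range (n+1), B j * (Real.exp (c * x) * x ^ j)) :=
    fun c B => ContDiff.sum fun j _ => contDiff_const.mul (cd_exp_pow c j)
  have hsub : iteratedDeriv i (fun x =>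
      (∑ j ∈ Finset.range (n+1), co n a j * (Real.exp ((2*k : ℝ) * x) * x ^ j))
      - ∑ j ∈ Finset.range (n+1), co n b j * (Real.exp ((0:ℝ) * x) * x ^ j)) 0
      = iteratedDeriv i (fun x =>
          ∑ j ∈ Finset.range (n+1), co n a j * (Real.exp ((2*k : ℝ) * x) * x ^ j)) 0
        - iteratedDeriv i (fun x =>
          ∑ j ∈ Finset.range (n+1), co n b j * (Real.exp ((0:ℝ) * x) * x ^ j)) 0 := by
    simp only [← iteratedDerivWithin_univ]
    exact iteratedDerivWithin_sub (Set.mem_univ 0) uniqueDiffOn_univ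
      (((cdS _ _).of_le (by exact_mod_cast le_top)).contDiffWithinAt) (((cdS _ _).of_le (by exact_mod_cast le_top)).contDiffWithinAt)
  rw [hsub,
    iter_sum _ _ _ _ (fun j _ => contDiff_const.mul (cd_exp_pow ((2*k:ℝ)) j)),
    iter_sum _ _ _ _ (fun j _ => contDiff_const.mul (cd_exp_pow ((0:ℝ)) j))]
  have rw1 : ∀ (c : ℝ) (B : ℕ → ℝ) (j : ℕ),
      iteratedDeriv i (fun x => B j * (Real.exp (c * x) * x ^ j)) 0
        = B j * ((i.choose j : ℝ) * j.factorial * c ^ (i - j)) := by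
    intro c B j
    rw [iter_cmul _ _ _ _ (cd_exp_pow c j), key_deriv]
  simp only [rw1]
  -- second sum
  have hsum2 : ∑ j ∈ Finset.range (n+1),
      co n b j * ((i.choose j : ℝ) * j.factorial * (0:ℝ) ^ (i - j))
      = co n b i * i.factorial := by
    rw [Finset.sum_eq_single_of_mem i (Finset.mem_range.mpr (by omega))]
    · simp
    · intro j hj hne
      rcases lt_or_gt_of_ne hne with hlt | hgt
      · rw [zero_pow (by omega)]; ring
      · rw [Nat.choose_eq_zero_of_lt hgt]; simp
  rw [hsum2]
  -- first sum : restrict to range (i+1)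
  have hsum1 : ∑ j ∈ Finset.range (n+1),
      co n a j * ((i.choose j : ℝ) * j.factorial * ((2*k:ℝ)) ^ (i - j))
      = ∑ j ∈ Finset.range (i+1),
        co n a j * ((i.choose j : ℝ) * j.factorial * ((2*k:ℝ)) ^ (i - j)) := by
    refine (Finset.sum_subset (Finset.range_subset_range.mpr (by omega)) fun j hj hj' => ?_).symm
    rw [Nat.choose_eq_zero_of_lt (by simp at hj'; omega)]
    simp
  rw [hsum1]
  -- main algebraic identity
  set t : ℝ := b - a with ht_def
  have hterm : ∀ j ∈ Finset.range (i+1),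
      co n a j * ((i.choose j : ℝ) * j.factorial * ((2*k:ℝ)) ^ (i - j))
        = (-1:ℝ)^(n-i) * (n.factorial : ℝ) * a⁻¹ *
            ((i.choose j : ℝ) * t ^ (i-j) * a ^ j * a
              - (i.choose j : ℝ) * t ^ (i-j) * ((j:ℝ) * a ^ j)) := by
    intro j hj
    have hji : j ≤ i := by simp at hj; omega
    unfold co
    have hz : a ^ ((j:ℤ) - 1) = a ^ j * a⁻¹ := by
      rw [zpow_sub_one₀ ha, zpow_natCast]
    have hsign : (-1:ℝ) ^ (n - j) = (-1:ℝ)^(n-i) * (-1:ℝ)^(i-j) := by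
      rw [← pow_add]; congr 1; omega
    have ht2 : t ^ (i-j) = (-1:ℝ)^(i-j) * (2*k:ℝ)^(i-j) := by
      rw [← neg_one_mul, ← mul_pow]
      congr 1
      simp only [ht_def, ha_def, hb_def]; ring
    have hfac : ((n.factorial : ℝ) / (j.factorial : ℝ)) * (j.factorial : ℝ)
        = (n.factorial : ℝ) := div_mul_cancel₀ _ (by positivity)
    rw [hz, hsign, ht2]
    field_simp
  rw [Finset.sum_congr rfl hterm, ← Finset.mul_sum]
  have : (∑ j ∈ Finset.range (i+1),
      ((i.choose j : ℝ) * t ^ (i-j) * a ^ j * a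
        - (i.choose j : ℝ) * t ^ (i-j) * ((j:ℝ) * a ^ j)))
      = (t+a)^i * a - (i:ℝ) * a * (t+a)^(i-1) := by
    rw [Finset.sum_sub_distrib, ← Finset.sum_mul, bin1, bin2]
  rw [this]
  have hta : t + a = b := by simp only [ht_def]; ring
  rw [hta]
  -- finish
  unfold co
  have hz : b ^ ((i:ℤ) - 1) = b ^ i * b⁻¹ := by
    rw [zpow_sub_one₀ hb', zpow_natCast]
  rw [hz]
  have hfac : ((n.factorial : ℝ) / (i.factorial : ℝ)) * (i.factorial : ℝ)
      = (n.factorial : ℝ) := div_mul_cancel₀ _ (by positivity)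
  have hinv : a⁻¹ * a = 1 := inv_mul_cancel₀ ha
  have key2 : b ^ i - (i:ℝ) * b ^ (i-1) = b ^ i * b⁻¹ * (b - (i:ℝ)) := by
    rcases Nat.eq_zero_or_pos i with rfl | hipos
    · simp [mul_inv_cancel₀ hb', inv_mul_cancel₀ hb']
    · have hbp : b ^ (i - 1) * b = b ^ i := by
        rw [← pow_succ]; congr 1; omega
      rw [← hbp]
      field_simp
  linear_combination ((-1:ℝ)^(n-i) * (n.factorial:ℝ) * ((b:ℝ)^i - (i:ℝ)*b^(i-1))) * hinv
    - ((-1:ℝ)^(n-i) * (b^i*b⁻¹*(b-(i:ℝ)))) * hfac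
    + ((-1:ℝ)^(n-i) * (n.factorial:ℝ)) * key2
end

section
/- For integers n ≥ 2 and 1 ≤ k ≤ n-1, the (n+1)-st derivative of h(x) = e^{2kx} ∑_{j=0}^n (-1)^{n-j} (n!/j!) (n+k)^{j-1}(n+k-j) x^j - ∑_{j=0}^n (-1)^{n-j} (n!/j!) (n-k)^{j-1}(n-k-j) x^j satisfies h^{(n+1)}(x) > 0 for all x ≥ 0. -/
open Finset Real

section Aux

open Polynomial

/-! ### Combinatorial positivity -/

private lemma wbinom (a c : ℝ) (M : ℕ) :
    ∑ j ∈ range (M+2), (j:ℝ) * (c^j * (-a)^(M+1-j) * ((M+1).choose j : ℕ)) =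
      ((M:ℝ)+1) * c * (c + -a)^M := by
  rw [Finset.sum_range_succ'] -- peels j = 0
  simp only [Nat.cast_zero, zero_mul, add_zero]
  have key : ∀ j ∈ range (M+1), ((j+1 : ℕ):ℝ) * (c^(j+1) * (-a)^(M+1-(j+1)) * (((M+1).choose (j+1) : ℕ))) = ((M:ℝ)+1) * c * (c^j * (-a)^(M-j) * ((M.choose j : ℕ))) := by
    intro j hj
    have h1 : (M+1).choose (j+1) * (j+1) = (M+1) * M.choose j := by
      rw [← Nat.add_one_mul_choose_eq]
    have h1' : (((M+1).choose (j+1) : ℕ) : ℝ) * ((j:ℝ)+1) = ((M:ℝ)+1) * (M.choose j : ℕ) := by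
      exact_mod_cast congrArg (Nat.cast : ℕ → ℝ) h1
    have h2 : M + 1 - (j+1) = M - j := by omega
    rw [h2, pow_succ]
    push_cast
    linear_combination (c^j * c * (-a)^(M-j)) * h1'
  rw [Finset.sum_congr rfl key, ← Finset.mul_sum]
  rw [add_pow c (-a) M]

private lemma Vbase_eq (k : ℕ) (a b : ℝ) (M : ℕ) :
    ∑ j ∈ range (M+1), (-1:ℝ)^(M-j) * ((M+1).choose j : ℕ) * a^(M+1-j) * (b+a)^j * ((M:ℝ)+k-j)
      = (b+a)^(M+1)*((k:ℝ)-1) - (((M:ℝ)+k)*b^(M+1) - ((M:ℝ)+1)*(b+a)*b^M) := by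
  set c : ℝ := b + a with hc
  have hb : b = c + -a := by rw [hc]; ring
  have full : ∑ j ∈ range (M+2), (-1:ℝ)^(M+1-j) * ((M+1).choose j : ℕ) * a^(M+1-j) * c^j * ((M:ℝ)+k-j)
      = ((M:ℝ)+k) * b^(M+1) - ((M:ℝ)+1) * c * b^M := by
    have e1 : ∀ j ∈ range (M+2), (-1:ℝ)^(M+1-j) * ((M+1).choose j : ℕ) * a^(M+1-j) * c^j * ((M:ℝ)+k-j)
        = ((M:ℝ)+k) * (c^j * (-a)^(M+1-j) * ((M+1).choose j : ℕ))
          - (j:ℝ) * (c^j * (-a)^(M+1-j) * ((M+1).choose j : ℕ)) := by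
      intro j hj
      rw [neg_pow]
      ring
    rw [Finset.sum_congr rfl e1, Finset.sum_sub_distrib, ← Finset.mul_sum,
      wbinom a c M, ← add_pow c (-a) (M+1), ← hb]
  rw [Finset.sum_range_succ] at full
  have htop : (-1:ℝ)^(M+1-(M+1)) * ((M+1).choose (M+1) : ℕ) * a^(M+1-(M+1)) * c^(M+1) * ((M:ℝ)+k-((M+1:ℕ):ℝ))
      = c^(M+1) * ((k:ℝ)-1) := by
    simp only [Nat.sub_self, Nat.choose_self, pow_zero, Nat.cast_one]
    push_cast
    ring
  rw [htop] at full
  have hterm : ∀ j ∈ range (M+1), (-1:ℝ)^(M+1-j) * ((M+1).choose j : ℕ) * a^(M+1-j) * c^j * ((M:ℝ)+k-j)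
      = -((-1:ℝ)^(M-j) * ((M+1).choose j : ℕ) * a^(M+1-j) * c^j * ((M:ℝ)+k-j)) := by
    intro j hj
    simp only [mem_range] at hj
    have : M + 1 - j = (M - j) + 1 := by omega
    rw [this, pow_succ]
    ring
  rw [Finset.sum_congr rfl hterm, Finset.sum_neg_distrib] at full
  linarith [full]

private lemma Vpos (k : ℕ) (hk : 1 ≤ k) (a b : ℝ) (ha : 0 < a) (hb : 1 ≤ b) :
    ∀ N M : ℕ, M < N →
      0 < ∑ j ∈ range (M+1), (-1:ℝ)^(M-j) * ((N.choose j : ℕ) : ℝ) * a^(N-j) * (b+a)^j * ((M:ℝ)+k-j) := by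
  have hb0 : (0:ℝ) < b := by linarith
  have hc0 : (0:ℝ) < b + a := by linarith
  have hkR : (0:ℝ) < k := by exact_mod_cast hk
  intro N
  induction N with
  | zero => omega
  | succ N ih =>
    intro M hMN
    rcases Nat.eq_zero_or_pos M with hM0 | hMpos
    · subst hM0
      rw [Finset.sum_range_one]
      simp only [Nat.sub_zero, Nat.choose_zero_right, Nat.cast_one, pow_zero, Nat.cast_zero]
      have := pow_pos ha (N+1)
      nlinarith
    rcases Nat.lt_or_ge M N with hlt | hge
    · -- recurrence case
      obtain ⟨M', rfl⟩ : ∃ M', M = M' + 1 := ⟨M - 1, by omega⟩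
      set c : ℝ := b + a with hcdef
      have step : ∀ j ∈ range (M'+1),
          (-1:ℝ)^(M'+1-(j+1)) * (((N+1).choose (j+1) : ℕ) : ℝ) * a^(N+1-(j+1)) * c^(j+1) * (((M'+1:ℕ):ℝ)+k-((j+1:ℕ):ℝ))
          = a * ((-1:ℝ)^(M'+1-(j+1)) * ((N.choose (j+1) : ℕ) : ℝ) * a^(N-(j+1)) * c^(j+1) * (((M'+1:ℕ):ℝ)+k-((j+1:ℕ):ℝ)))
            + c * ((-1:ℝ)^(M'-j) * ((N.choose j : ℕ) : ℝ) * a^(N-j) * c^j * ((M':ℝ)+k-(j:ℝ))) := by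
        intro j hj
        simp only [mem_range] at hj
        have h1 : M'+1-(j+1) = M'-j := by omega
        have h2 : N+1-(j+1) = N-j := by omega
        have h3 : N-j = (N-(j+1))+1 := by omega
        rw [h1, h2, Nat.choose_succ_succ, h3, pow_succ]
        push_cast
        ring
      have zero : (-1:ℝ)^(M'+1-0) * (((N+1).choose 0 : ℕ) : ℝ) * a^(N+1-0) * c^0 * (((M'+1:ℕ):ℝ)+k-((0:ℕ):ℝ))
          = a * ((-1:ℝ)^(M'+1-0) * ((N.choose 0 : ℕ) : ℝ) * a^(N-0) * c^0 * (((M'+1:ℕ):ℝ)+k-((0:ℕ):ℝ))) := by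
        simp only [Nat.choose_zero_right, Nat.sub_zero, Nat.cast_one, pow_zero]
        rw [pow_succ]
        ring
      have peel : ∑ j ∈ range (M'+1+1), (-1:ℝ)^(M'+1-j) * (((N+1).choose j : ℕ) : ℝ) * a^(N+1-j) * c^j * (((M'+1:ℕ):ℝ)+k-(j:ℝ))
          = a * (∑ j ∈ range (M'+1+1), (-1:ℝ)^(M'+1-j) * ((N.choose j : ℕ) : ℝ) * a^(N-j) * c^j * (((M'+1:ℕ):ℝ)+k-(j:ℝ)))
            + c * (∑ j ∈ range (M'+1), (-1:ℝ)^(M'-j) * ((N.choose j : ℕ) : ℝ) * a^(N-j) * c^j * ((M':ℝ)+k-(j:ℝ))) := by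
        rw [Finset.sum_range_succ' _ (M'+1), Finset.sum_range_succ' (fun j => (-1:ℝ)^(M'+1-j) * ((N.choose j : ℕ) : ℝ) * a^(N-j) * c^j * (((M'+1:ℕ):ℝ)+k-(j:ℝ))) (M'+1)]
        rw [Finset.sum_congr rfl step]
        rw [Finset.sum_add_distrib, ← Finset.mul_sum, ← Finset.mul_sum, zero]
        ring
      have hA := ih (M'+1) hlt
      have hB := ih M' (by omega)
      have goal := add_pos (mul_pos ha hA) (mul_pos hc0 hB)
      calc (0:ℝ) < _ := goal
        _ = _ := by rw [← peel]
    · -- base case N = M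
      have hNM : N = M := by omega
      subst hNM
      have conv : ∑ j ∈ range (N+1), (-1:ℝ)^(N-j) * (((N+1).choose j : ℕ) : ℝ) * a^(N+1-j) * (b+a)^j * ((N:ℝ)+k-j)
          = ∑ j ∈ range (N+1), (-1:ℝ)^(N-j) * ((N+1).choose j : ℕ) * a^(N+1-j) * (b+a)^j * ((N:ℝ)+k-j) := rfl
      rw [conv, Vbase_eq k a b N]
      have hk1R : (1:ℝ) ≤ (k:ℝ) := by exact_mod_cast hk
      have hk1 : (0:ℝ) ≤ (k:ℝ) - 1 := by linarith
      have hpow : (b+a) * b^N ≤ (b+a)^(N+1) := by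
        rw [pow_succ']
        gcongr
        linarith
      have h1 : (b+a)^(N+1)*((k:ℝ)-1) ≥ (b+a) * b^N * ((k:ℝ)-1) := by nlinarith
      have h2 : ((N:ℝ)+1)*(b+a)*b^N - ((N:ℝ)+k)*b^(N+1) + (b+a) * b^N * ((k:ℝ)-1)
          = b^N * (((N:ℝ)+k) * a) := by
        rw [pow_succ]
        ring
      have h3 : (0:ℝ) < b^N * (((N:ℝ)+k) * a) := by positivity
      nlinarith [h1, h2, h3]

/-! ### Polynomial and calculus machinery -/

noncomputable def LM (a : ℝ) (p : ℝ[X]) : ℝ[X] := Polynomial.C a * p + Polynomial.derivative p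

noncomputable def Ppoly (f : ℕ → ℝ) (d : ℕ) : ℝ[X] := ∑ j ∈ range d, Polynomial.C (f j) * Polynomial.X^j

lemma coeff_LM (a : ℝ) (p : ℝ[X]) (i : ℕ) :
    (LM a p).coeff i = a * p.coeff i + ((i:ℝ)+1) * p.coeff (i+1) := by
  simp [LM, Polynomial.coeff_derivative]
  ring

lemma coeff_Ppoly (f : ℕ → ℝ) (d i : ℕ) :
    (Ppoly f d).coeff i = if i < d then f i else 0 := by
  rw [Ppoly, Polynomial.finset_sum_coeff]
  by_cases hi : i < d
  · rw [Finset.sum_eq_single i]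
    · simp [Polynomial.coeff_C_mul, Polynomial.coeff_X_pow, hi]
    · intro j hj hne
      simp [Polynomial.coeff_C_mul, Polynomial.coeff_X_pow, (Ne.symm hne)]
    · intro hni
      exact absurd (Finset.mem_range.mpr hi) hni
  · rw [if_neg hi]
    apply Finset.sum_eq_zero
    intro j hj
    simp only [Finset.mem_range] at hj
    have : i ≠ j := by omega
    simp [Polynomial.coeff_C_mul, Polynomial.coeff_X_pow, this]

lemma coeff_LM_iter_vanish (a : ℝ) (f : ℕ → ℝ) (d : ℕ) (m : ℕ) :
    ∀ i, d ≤ i → ((LM a)^[m] (Ppoly f d)).coeff i = 0 := by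
  induction m with
  | zero =>
    intro i hi
    rw [Function.iterate_zero_apply, coeff_Ppoly, if_neg (by omega)]
  | succ m ih =>
    intro i hi
    rw [Function.iterate_succ_apply', coeff_LM, ih i hi, ih (i+1) (by omega)]
    ring

lemma natDegree_LM_iter (a : ℝ) (f : ℕ → ℝ) (d m : ℕ) (hd : 1 ≤ d) :
    ((LM a)^[m] (Ppoly f d)).natDegree < d := by
  have h := Polynomial.natDegree_le_iff_coeff_eq_zero.mpr
    (fun N hN => coeff_LM_iter_vanish a f d m N (by omega) : ∀ N, d - 1 < N → ((LM a)^[m] (Ppoly f d)).coeff N = 0)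
  omega

lemma contDiff_eval (p : ℝ[X]) : ContDiff ℝ (⊤ : ℕ∞) (fun x : ℝ => p.eval x) := by
  induction p using Polynomial.induction_on' with
  | add p q hp hq => simpa [Polynomial.eval_add] using hp.add hq
  | monomial n r =>
    simpa [Polynomial.eval_monomial] using (contDiff_const (c := r)).mul (contDiff_id.pow n)

lemma contDiff_exp_mul_eval (a : ℝ) (p : ℝ[X]) :
    ContDiff ℝ (⊤ : ℕ∞) (fun x : ℝ => Real.exp (a*x) * p.eval x) :=
  (Real.contDiff_exp.comp ((contDiff_const (c := a)).mul contDiff_id)).mul (contDiff_eval p)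

lemma hasDerivAt_exp_mul_eval (a : ℝ) (p : ℝ[X]) (x : ℝ) :
    HasDerivAt (fun x : ℝ => Real.exp (a*x) * p.eval x)
      (Real.exp (a*x) * ((LM a p).eval x)) x := by
  have h1 : HasDerivAt (fun x : ℝ => Real.exp (a*x)) (Real.exp (a*x) * a) x := by
    exact ((Real.hasDerivAt_exp (a*x)).comp x ((hasDerivAt_id x).const_mul a)).congr_deriv (by ring)
  have h2 : HasDerivAt (fun x : ℝ => p.eval x) (p.derivative.eval x) x := p.hasDerivAt x
  have := h1.fun_mul h2
  simpa [LM, Polynomial.eval_add, Polynomial.eval_mul, Polynomial.eval_C] using this.congr_deriv (by ring)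

lemma iteratedDeriv_exp_mul_eval (a : ℝ) (p : ℝ[X]) (m : ℕ) :
    iteratedDeriv m (fun x : ℝ => Real.exp (a*x) * p.eval x)
      = fun x : ℝ => Real.exp (a*x) * (((LM a)^[m] p).eval x) := by
  induction m generalizing p with
  | zero => simp
  | succ m ih =>
    have hd : (deriv fun x : ℝ => Real.exp (a*x) * p.eval x)
        = fun x : ℝ => Real.exp (a*x) * ((LM a p).eval x) := by
      funext x
      exact (hasDerivAt_exp_mul_eval a p x).deriv
    rw [iteratedDeriv_succ', hd, ih, Function.iterate_succ_apply]

lemma iteratedDeriv_eval (p : ℝ[X]) (m : ℕ) :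
    iteratedDeriv m (fun x : ℝ => p.eval x)
      = fun x : ℝ => ((Polynomial.derivative^[m] p).eval x) := by
  induction m generalizing p with
  | zero => simp
  | succ m ih =>
    have hd : (deriv fun x : ℝ => p.eval x) = fun x : ℝ => p.derivative.eval x := by
      funext x
      exact Polynomial.deriv (p := p) (x := x)
    rw [iteratedDeriv_succ', hd, ih, Function.iterate_succ_apply]

lemma iteratedDeriv_sub' (f g : ℝ → ℝ) (hf : ContDiff ℝ (⊤ : ℕ∞) f) (hg : ContDiff ℝ (⊤ : ℕ∞) g) (m : ℕ) :
    iteratedDeriv m (fun x => f x - g x) = fun x => iteratedDeriv m f x - iteratedDeriv m g x := by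
  induction m with
  | zero => simp
  | succ m ih =>
    rw [iteratedDeriv_succ, ih, iteratedDeriv_succ, iteratedDeriv_succ]
    funext x
    have hm : (m : WithTop ℕ∞) < ((⊤ : ℕ∞) : WithTop ℕ∞) := by
      exact_mod_cast ENat.coe_lt_top m
    exact deriv_fun_sub ((hf.differentiable_iteratedDeriv m hm).differentiableAt)
      ((hg.differentiable_iteratedDeriv m hm).differentiableAt)

/-! ### The coefficient formula -/

noncomputable def fco (n k : ℕ) : ℕ → ℝ := fun j =>
  (-1:ℝ)^(n-j) * ((n.factorial:ℝ) / (j.factorial:ℝ)) * ((n:ℝ)+(k:ℝ))^((j:ℤ)-1) * ((n:ℝ)+(k:ℝ)-(j:ℝ))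

lemma coeff_iter (n k : ℕ) (hk1 : 1 ≤ k) (hkn : k+1 ≤ n) (m : ℕ) :
    ∀ i, i ≤ n → ((LM (2*(k:ℝ)))^[m] (Ppoly (fco n k) (n+1))).coeff i
      = ((n.factorial:ℝ) / ((i.factorial:ℝ) * ((n:ℝ)+(k:ℝ)))) *
        ∑ j ∈ range (n-i+1), (-1:ℝ)^(n-i) * (-1:ℝ)^j * ((m.choose j : ℕ):ℝ)
          * ((2*(k:ℝ))^m / (2*(k:ℝ))^j) * ((n:ℝ)+(k:ℝ))^(i+j) * ((n:ℝ)+(k:ℝ)-(i:ℝ)-(j:ℝ)) := by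
  set A : ℝ := 2*(k:ℝ) with hA
  set cc : ℝ := (n:ℝ)+(k:ℝ) with hcc
  have hcc0 : (0:ℝ) < cc := by
    rw [hcc]
    have : (1:ℝ) ≤ (k:ℝ) := by exact_mod_cast hk1
    have : (0:ℝ) ≤ (n:ℝ) := by positivity
    linarith
  have hA0 : (0:ℝ) < A := by
    rw [hA]
    have : (1:ℝ) ≤ (k:ℝ) := by exact_mod_cast hk1
    linarith
  induction m with
  | zero =>
    intro i hi
    rw [Function.iterate_zero_apply, coeff_Ppoly, if_pos (by omega)]
    have hs : ∑ j ∈ range (n-i+1), (-1:ℝ)^(n-i) * (-1:ℝ)^j * ((Nat.choose 0 j : ℕ):ℝ)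
          * (A^0 / A^j) * cc^(i+j) * (cc-(i:ℝ)-(j:ℝ))
        = (-1:ℝ)^(n-i) * cc^i * (cc-(i:ℝ)) := by
      rw [Finset.sum_eq_single 0]
      · simp
      · intro j hj hne
        obtain ⟨j', rfl⟩ := Nat.exists_eq_succ_of_ne_zero hne
        simp [Nat.choose]
      · intro habs
        exact absurd (Finset.mem_range.mpr (by omega)) habs
    rw [hs]
    have hz : cc ^ ((i:ℤ)-1) = cc^i / cc := by
      rw [zpow_sub₀ hcc0.ne', zpow_natCast, zpow_one]
    rw [fco, hz]
    field_simp
    ring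
  | succ m ih =>
    intro i hi
    rw [Function.iterate_succ_apply', coeff_LM]
    rcases Nat.lt_or_ge i n with hilt | hige
    · -- i < n
      rw [ih i hi, ih (i+1) (by omega)]
      have hsub : n - i = (n - (i+1)) + 1 := by omega
      set M' : ℕ := n - (i+1) with hM'
      have key : ∑ j ∈ range (n-i+1), (-1:ℝ)^(n-i) * (-1:ℝ)^j * (((m+1).choose j : ℕ):ℝ)
            * (A^(m+1) / A^j) * cc^(i+j) * (cc-(i:ℝ)-(j:ℝ))
          = A * ∑ j ∈ range (n-i+1), (-1:ℝ)^(n-i) * (-1:ℝ)^j * ((m.choose j : ℕ):ℝ)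
              * (A^m / A^j) * cc^(i+j) * (cc-(i:ℝ)-(j:ℝ))
            + ∑ j ∈ range (M'+1), (-1:ℝ)^(M') * (-1:ℝ)^j * ((m.choose j : ℕ):ℝ)
              * (A^m / A^j) * cc^((i+1)+j) * (cc-((i+1:ℕ):ℝ)-(j:ℝ)) := by
        have hran : n - i + 1 = (M'+1) + 1 := by omega
        rw [hran, hsub]
        rw [Finset.sum_range_succ' _ (M'+1), Finset.sum_range_succ'
          (fun j => (-1:ℝ)^(M'+1) * (-1:ℝ)^j * ((m.choose j : ℕ):ℝ)
              * (A^m / A^j) * cc^(i+j) * (cc-(i:ℝ)-(j:ℝ))) (M'+1)]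
        have hpt : ∀ j ∈ range (M'+1),
            (-1:ℝ)^(M'+1) * (-1:ℝ)^(j+1) * (((m+1).choose (j+1) : ℕ):ℝ)
              * (A^(m+1) / A^(j+1)) * cc^(i+(j+1)) * (cc-(i:ℝ)-((j+1:ℕ):ℝ))
            = A * ((-1:ℝ)^(M'+1) * (-1:ℝ)^(j+1) * ((m.choose (j+1) : ℕ):ℝ)
              * (A^m / A^(j+1)) * cc^(i+(j+1)) * (cc-(i:ℝ)-((j+1:ℕ):ℝ)))
              + (-1:ℝ)^(M') * (-1:ℝ)^j * ((m.choose j : ℕ):ℝ)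
              * (A^m / A^j) * cc^((i+1)+j) * (cc-((i+1:ℕ):ℝ)-(j:ℝ)) := by
          intro j hj
          have hc1 : (((m+1).choose (j+1) : ℕ):ℝ) = ((m.choose j : ℕ):ℝ) + ((m.choose (j+1) : ℕ):ℝ) := by
            exact_mod_cast congrArg (Nat.cast : ℕ → ℝ) (Nat.choose_succ_succ m j)
          have he1 : i + (j+1) = (i+1) + j := by omega
          rw [hc1, he1]
          have hAne : A ≠ 0 := hA0.ne'
          push_cast
          field_simp
          ring
        rw [Finset.sum_congr rfl hpt, Finset.sum_add_distrib, ← Finset.mul_sum]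
        have h0 : (-1:ℝ)^(M'+1) * (-1:ℝ)^(0:ℕ) * (((m+1).choose 0 : ℕ):ℝ)
              * (A^(m+1) / A^(0:ℕ)) * cc^(i+0) * (cc-(i:ℝ)-((0:ℕ):ℝ))
            = A * ((-1:ℝ)^(M'+1) * (-1:ℝ)^(0:ℕ) * ((m.choose 0 : ℕ):ℝ)
              * (A^m / A^(0:ℕ)) * cc^(i+0) * (cc-(i:ℝ)-((0:ℕ):ℝ))) := by
          simp only [Nat.choose_zero_right, pow_zero, Nat.cast_one, Nat.cast_zero]
          rw [pow_succ]
          ring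
        rw [h0]
        ring
      rw [key]
      have hfac : (((i+1).factorial : ℕ):ℝ) = ((i:ℝ)+1) * ((i.factorial : ℕ):ℝ) := by
        exact_mod_cast congrArg (Nat.cast : ℕ → ℝ) (Nat.factorial_succ i)
      have hif : ((i.factorial : ℕ):ℝ) ≠ 0 := by
        exact_mod_cast (Nat.factorial_pos i).ne'
      have hpref : ((i:ℝ)+1) * ((n.factorial:ℝ) / (((i+1).factorial:ℝ) * cc))
          = (n.factorial:ℝ) / ((i.factorial:ℝ) * cc) := by
        rw [hfac]
        field_simp
      linear_combination (∑ j ∈ range (M'+1), (-1:ℝ)^(M') * (-1:ℝ)^j * ((m.choose j : ℕ):ℝ)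
              * (A^m / A^j) * cc^((i+1)+j) * (cc-((i+1:ℕ):ℝ)-(j:ℝ))) * hpref
    · -- i = n
      have hin : i = n := by omega
      subst hin
      rw [coeff_LM_iter_vanish A (fco i k) (i+1) m (i+1) (by omega), ih i le_rfl]
      have hs0 : i - i = 0 := by omega
      rw [hs0]
      rw [Finset.sum_range_one, Finset.sum_range_one]
      simp only [Nat.choose_zero_right, pow_zero, Nat.cast_one, Nat.cast_zero, mul_one]
      rw [pow_succ]
      ring

/-- Positivity of the coefficients of the `(n+1)`-st transform. -/
lemma coeff_final_pos (n k : ℕ) (hk1 : 1 ≤ k) (hkn : k+1 ≤ n) :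
    ∀ i, i ≤ n → 0 < ((LM (2*(k:ℝ)))^[n+1] (Ppoly (fco n k) (n+1))).coeff i := by
  intro i hi
  rw [coeff_iter n k hk1 hkn (n+1) i hi]
  set A : ℝ := 2*(k:ℝ) with hA
  set cc : ℝ := (n:ℝ)+(k:ℝ) with hcc
  set bb : ℝ := (n:ℝ)-(k:ℝ) with hbb
  have hk1R : (1:ℝ) ≤ (k:ℝ) := by exact_mod_cast hk1
  have hknR : (k:ℝ)+1 ≤ (n:ℝ) := by exact_mod_cast hkn
  have hA0 : (0:ℝ) < A := by rw [hA]; linarith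
  have hb1 : (1:ℝ) ≤ bb := by rw [hbb]; linarith
  have hcc0 : (0:ℝ) < cc := by rw [hcc]; linarith
  have hVsum := Vpos k hk1 A bb hA0 hb1 (n+1) (n-i) (by omega)
  have hsums : ∑ j ∈ range (n-i+1), (-1:ℝ)^(n-i) * (-1:ℝ)^j * (((n+1).choose j : ℕ):ℝ)
          * (A^(n+1) / A^j) * cc^(i+j) * (cc-(i:ℝ)-(j:ℝ))
      = cc^i * ∑ j ∈ range ((n-i)+1), (-1:ℝ)^((n-i)-j) * (((n+1).choose j : ℕ) : ℝ) * A^((n+1)-j) * (bb+A)^j * (((n-i:ℕ):ℝ)+k-j) := by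
    rw [Finset.mul_sum]
    apply Finset.sum_congr rfl
    intro j hj
    simp only [Finset.mem_range] at hj
    have hsgn : (-1:ℝ)^(n-i) = (-1:ℝ)^((n-i)-j) * (-1:ℝ)^j := by
      rw [← pow_add]
      congr 1
      omega
    have hpw : A^(n+1) / A^j = A^((n+1)-j) := by
      rw [eq_comm, pow_sub₀ A hA0.ne' (by omega), div_eq_mul_inv]
    have hba : bb + A = cc := by rw [hbb, hA, hcc]; ring
    have hMi : ((n-i:ℕ):ℝ) = (n:ℝ) - (i:ℝ) := by
      rw [Nat.cast_sub hi]
    have hj2 : ((-1:ℝ))^(j*2) = 1 := by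
      rw [mul_comm, pow_mul]
      norm_num
    rw [hsgn, hpw, hba, hMi, pow_add]
    ring_nf
    rw [hj2]
    ring
  rw [hsums]
  have hpos1 : (0:ℝ) < (n.factorial:ℝ) / ((i.factorial:ℝ) * cc) := by
    have h1 : (0:ℝ) < (n.factorial:ℝ) := by exact_mod_cast Nat.factorial_pos n
    have h2 : (0:ℝ) < (i.factorial:ℝ) := by exact_mod_cast Nat.factorial_pos i
    positivity
  have hpos2 : (0:ℝ) < cc^i := pow_pos hcc0 i
  positivity

end Aux

open Polynomial in
/-- For `n ≥ 2`, `1 ≤ k ≤ n-1`, the function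
`h x = e^{2kx} ∑_{j=0}^n (-1)^{n-j} (n!/j!) (n+k)^{j-1} (n+k-j) x^j
     - ∑_{j=0}^n (-1)^{n-j} (n!/j!) (n-k)^{j-1} (n-k-j) x^j`
satisfies `h⁽ⁿ⁺¹⁾(x) > 0` for all `x ≥ 0`. -/
theorem stmt_12 (n k : ℕ) (hn : 2 ≤ n) (hk1 : 1 ≤ k) (hk2 : k ≤ n - 1) (h : ℝ → ℝ)
    (hh : ∀ x : ℝ, h x =
      Real.exp (2 * k * x) *
        (∑ j ∈ Finset.range (n + 1),
          (-1 : ℝ) ^ (n - j) * ((n.factorial : ℝ) / (j.factorial : ℝ)) *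
            ((n : ℝ) + k) ^ ((j : ℤ) - 1) * ((n : ℝ) + k - j) * x ^ j)
      - ∑ j ∈ Finset.range (n + 1),
          (-1 : ℝ) ^ (n - j) * ((n.factorial : ℝ) / (j.factorial : ℝ)) *
            ((n : ℝ) - k) ^ ((j : ℤ) - 1) * ((n : ℝ) - k - j) * x ^ j) :
    ∀ x : ℝ, 0 ≤ x → 0 < iteratedDeriv (n + 1) h x := by
  intro x hx
  have hkn : k + 1 ≤ n := by omega
  -- the coefficient function of the second (pure polynomial) part
  set gco : ℕ → ℝ := fun j =>
    (-1:ℝ)^(n-j) * ((n.factorial:ℝ) / (j.factorial:ℝ)) * ((n:ℝ)-(k:ℝ))^((j:ℤ)-1) * ((n:ℝ)-(k:ℝ)-(j:ℝ)) with hgco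
  have heval1 : ∀ y : ℝ, (Ppoly (fco n k) (n+1)).eval y
      = ∑ j ∈ Finset.range (n + 1),
          (-1 : ℝ) ^ (n - j) * ((n.factorial : ℝ) / (j.factorial : ℝ)) *
            ((n : ℝ) + k) ^ ((j : ℤ) - 1) * ((n : ℝ) + k - j) * y ^ j := by
    intro y
    rw [Ppoly, Polynomial.eval_finset_sum]
    apply Finset.sum_congr rfl
    intro j hj
    simp [fco]
  have heval2 : ∀ y : ℝ, (Ppoly gco (n+1)).eval y
      = ∑ j ∈ Finset.range (n + 1),
          (-1 : ℝ) ^ (n - j) * ((n.factorial : ℝ) / (j.factorial : ℝ)) *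
            ((n : ℝ) - k) ^ ((j : ℤ) - 1) * ((n : ℝ) - k - j) * y ^ j := by
    intro y
    rw [Ppoly, Polynomial.eval_finset_sum]
    apply Finset.sum_congr rfl
    intro j hj
    simp [hgco]
  have hfun : h = fun y => Real.exp ((2*(k:ℝ))*y) * (Ppoly (fco n k) (n+1)).eval y
      - (Ppoly gco (n+1)).eval y := by
    funext y
    rw [hh y, heval1 y, heval2 y]
  rw [hfun]
  rw [iteratedDeriv_sub' _ _ (contDiff_exp_mul_eval _ _) (contDiff_eval _) (n+1)]
  rw [iteratedDeriv_exp_mul_eval, iteratedDeriv_eval]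
  have hdeg2 : (Ppoly gco (n+1)).natDegree < n+1 := by
    simpa using natDegree_LM_iter (2*(k:ℝ)) gco (n+1) 0 (by omega)
  rw [Polynomial.iterate_derivative_eq_zero hdeg2]
  simp only [Polynomial.eval_zero, sub_zero]
  have hQdeg : ((LM (2*(k:ℝ)))^[n+1] (Ppoly (fco n k) (n+1))).natDegree < n + 1 :=
    natDegree_LM_iter _ _ _ _ (by omega)
  rw [Polynomial.eval_eq_sum_range' hQdeg x]
  have hexp : 0 < Real.exp ((2*(k:ℝ))*x) := Real.exp_pos _
  apply mul_pos hexp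
  apply Finset.sum_pos'
  · intro i hi
    simp only [Finset.mem_range] at hi
    have hc := coeff_final_pos n k hk1 hkn i (by omega)
    positivity
  · refine ⟨0, Finset.mem_range.mpr (by omega), ?_⟩
    have hc := coeff_final_pos n k hk1 hkn 0 (by omega)
    simpa using hc
end

section
/- Let g : (0,∞) → ℝ be given by a convergent power series g(y) = ∑_{j=n+1}^{n+l} a_j y^j - ∑_{j=n+l+1}^∞ a_j y^j with all a_j > 0 and l ≥ 1. Then g has exactly one zero in (0,∞). -/
/-! Dividing by `y ^ N`, where `N` separates the nonnegative coefficients from the nonpositive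
ones, turns every term `c j * y ^ (j - N)` into an antitone function of `y > 0`, strictly so at a
negative coefficient; hence `f y / y ^ N` is strictly decreasing and `f` has at most one positive
zero. A positive coefficient at some `i ≤ N` makes `f` positive near `0`, a negative one at some
`k > N` makes it negative for large `y`, and the intermediate value theorem gives the zero. -/

open Set

lemma zpow_le_zpow_left_of_nonpos₀ {α : Type*} [Field α] [LinearOrder α] [IsStrictOrderedRing α]
    {a b : α} {m : ℤ} (hm : m ≤ 0) (ha : 0 < a) (hab : a ≤ b) :
    b ^ m ≤ a ^ m := by
  obtain ⟨k, hk, rfl⟩ : ∃ k : ℤ, 0 ≤ k ∧ m = -k := ⟨-m, by omega, by ring⟩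
  rw [zpow_neg, zpow_neg]
  exact inv_anti₀ (zpow_pos ha k) (zpow_le_zpow_left₀ hk ha.le hab)

section SignChange

variable {c : ℕ → ℝ} {f : ℝ → ℝ} {N : ℕ}

lemma hasSum_mul_zpow_sub_of_hasSum_pow (hf : ∀ y, 0 < y → HasSum (fun j => c j * y ^ j) (f y))
    {y : ℝ} (hy : 0 < y) : HasSum (fun j => c j * y ^ ((j : ℤ) - N)) (f y / y ^ N) := by
  refine ((hf y hy).div_const _).congr_fun fun j => ?_
  rw [zpow_sub₀ hy.ne', zpow_natCast, zpow_natCast, mul_div_assoc]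

lemma continuousOn_Icc_of_hasSum_pow (hf : ∀ y, 0 < y → HasSum (fun j => c j * y ^ j) (f y))
    {a b : ℝ} (ha : 0 < a) : ContinuousOn f (Icc a b) := by
  have hb : 0 < max a b := lt_max_of_lt_left ha
  have hsum : ContinuousOn (fun y => ∑' j, c j * y ^ j) (Icc a b) := by
    refine continuousOn_tsum (u := fun j => |c j * max a b ^ j|) (fun j => by fun_prop)
      (summable_abs_iff.2 (hf _ hb).summable) fun j y hy => ?_
    have hy0 : 0 < y := ha.trans_le hy.1
    rw [Real.norm_eq_abs, abs_mul, abs_mul, abs_pow, abs_pow, abs_of_pos hy0, abs_of_pos hb]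
    gcongr
    exact le_max_of_le_right hy.2
  exact hsum.congr fun y hy => ((hf y (ha.trans_le hy.1)).tsum_eq).symm

lemma strictAntiOn_div_pow_of_sign_change
    (hf : ∀ y, 0 < y → HasSum (fun j => c j * y ^ j) (f y))
    (hle : ∀ j ≤ N, 0 ≤ c j) (hgt : ∀ j, N < j → c j ≤ 0) {k : ℕ} (hk : N < k) (hck : c k < 0) :
    StrictAntiOn (fun y => f y / y ^ N) (Ioi 0) := by
  intro x (hx : 0 < x) y (hy : 0 < y) hxy
  refine hasSum_lt (i := k) (fun j => ?_) ?_ (hasSum_mul_zpow_sub_of_hasSum_pow hf hy)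
    (hasSum_mul_zpow_sub_of_hasSum_pow hf hx)
  · rcases le_or_gt j N with hj | hj
    · exact mul_le_mul_of_nonneg_left
        (zpow_le_zpow_left_of_nonpos₀ (by omega) hx hxy.le) (hle j hj)
    · exact mul_le_mul_of_nonpos_left
        (zpow_le_zpow_left₀ (by omega) hx.le hxy.le) (hgt j hj)
  · exact mul_lt_mul_of_neg_left (zpow_lt_zpow_left₀ (by omega) hx.le hxy) hck

lemma exists_pos_of_sign_change (hf : ∀ y, 0 < y → HasSum (fun j => c j * y ^ j) (f y))
    (hle : ∀ j ≤ N, 0 ≤ c j) (hgt : ∀ j, N < j → c j ≤ 0) {i : ℕ} (hi : i ≤ N) (hci : 0 < c i) :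
    ∃ y, 0 < y ∧ 0 < f y := by
  obtain ⟨T, hT⟩ : Summable ((Ioi N).indicator c) :=
    (by simpa using (hf 1 one_pos).summable : Summable c).indicator _
  have hT0 : T ≤ 0 := hT.nonpos (indicator_nonpos fun j hj => hgt j hj)
  -- On `(0, 1]` the terms of `f y / y ^ N` are at least `c i` at `i`, `0` at the other `j ≤ N`,
  -- and `y * c j` at `j > N`.
  have hbound : ∀ y, 0 < y → y ≤ 1 → c i + y * T ≤ f y / y ^ N := fun y hy hy1 => by
    refine hasSum_le (fun j => ?_) ((hasSum_ite_eq i (c i)).add (hT.mul_left y))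
      (hasSum_mul_zpow_sub_of_hasSum_pow hf hy)
    rcases le_or_gt j N with hj | hj
    · rw [indicator_of_notMem (by simpa using hj), mul_zero, add_zero]
      split_ifs with hji
      · subst hji
        exact le_mul_of_one_le_right hci.le (one_le_zpow_of_nonpos₀ hy hy1 (by omega))
      · exact mul_nonneg (hle j hj) (zpow_nonneg hy.le _)
    · rw [if_neg (by omega), indicator_of_mem (by simpa using hj), zero_add, mul_comm y]
      refine mul_le_mul_of_nonpos_left ?_ (hgt j hj)
      simpa using zpow_le_zpow_right_of_le_one₀ hy hy1 (show (1 : ℤ) ≤ j - N by omega)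
  have hden : 0 < c i - T := by linarith
  refine ⟨c i / (c i - T), div_pos hci hden, ?_⟩
  have hy1 : c i / (c i - T) ≤ 1 := (div_le_one hden).2 (by linarith)
  have hval : c i + c i / (c i - T) * T = c i ^ 2 / (c i - T) := by field_simp; ring
  have hpos := (show 0 < c i ^ 2 / (c i - T) by positivity).trans_le
    (hval ▸ hbound _ (div_pos hci hden) hy1)
  simpa using (lt_div_iff₀ (pow_pos (div_pos hci hden) N)).1 hpos

lemma exists_neg_of_sign_change (hf : ∀ y, 0 < y → HasSum (fun j => c j * y ^ j) (f y))
    (hle : ∀ j ≤ N, 0 ≤ c j) (hgt : ∀ j, N < j → c j ≤ 0) {k : ℕ} (hk : N < k) (hck : c k < 0) :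
    ∃ y, 0 < y ∧ f y < 0 := by
  obtain ⟨P, hP⟩ : Summable ((Iic N).indicator c) :=
    (by simpa using (hf 1 one_pos).summable : Summable c).indicator _
  have hP0 : 0 ≤ P := hP.nonneg fun j => indicator_nonneg (fun j hj => hle j hj) j
  -- On `[1, ∞)` the terms of `f y / y ^ N` are at most `c j` at `j ≤ N`, `y * c k` at `k`,
  -- and `0` at the other `j > N`.
  have hbound : ∀ y, 1 ≤ y → f y / y ^ N ≤ P + y * c k := fun y hy1 => by
    have hy : 0 < y := one_pos.trans_le hy1
    refine hasSum_le (fun j => ?_) (hasSum_mul_zpow_sub_of_hasSum_pow hf hy)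
      (hP.add (hasSum_ite_eq k (y * c k)))
    rcases le_or_gt j N with hj | hj
    · rw [indicator_of_mem (by simpa using hj), if_neg (by omega), add_zero]
      exact mul_le_of_le_one_right (hle j hj) (zpow_le_one_of_nonpos₀ hy1 (by omega))
    · rw [indicator_of_notMem (by simpa using hj), zero_add]
      split_ifs with hjk
      · subst hjk
        rw [mul_comm y]
        refine mul_le_mul_of_nonpos_left ?_ hck.le
        simpa using zpow_le_zpow_right₀ hy1 (show (1 : ℤ) ≤ j - N by omega)
      · exact mul_nonpos_of_nonpos_of_nonneg (hgt j hj) (zpow_nonneg hy.le _)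
  have hy1 : 1 ≤ 1 - P / c k := by linarith [div_nonpos_of_nonneg_of_nonpos hP0 hck.le]
  refine ⟨1 - P / c k, one_pos.trans_le hy1, ?_⟩
  have hval : P + (1 - P / c k) * c k = c k := by field_simp [hck.ne]; ring
  have hneg := (hbound _ hy1).trans_lt (hval.trans_lt hck)
  simpa using (div_lt_iff₀ (pow_pos (one_pos.trans_le hy1) N)).1 hneg

theorem existsUnique_pos_root_of_sign_change
    (hf : ∀ y, 0 < y → HasSum (fun j => c j * y ^ j) (f y))
    (hle : ∀ j ≤ N, 0 ≤ c j) (hgt : ∀ j, N < j → c j ≤ 0) {i k : ℕ} (hi : i ≤ N) (hci : 0 < c i)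
    (hk : N < k) (hck : c k < 0) :
    ∃! y, 0 < y ∧ f y = 0 := by
  obtain ⟨p, hp, hfp⟩ := exists_pos_of_sign_change hf hle hgt hi hci
  obtain ⟨q, hq, hfq⟩ := exists_neg_of_sign_change hf hle hgt hk hck
  have huIcc : uIcc p q ⊆ Ioi 0 := fun y hy => lt_of_lt_of_le (lt_min hp hq) hy.1
  obtain ⟨y, hy, hfy⟩ := intermediate_value_uIcc
    (continuousOn_Icc_of_hasSum_pow hf (lt_min hp hq)) (mem_uIcc.2 (Or.inr ⟨hfq.le, hfp.le⟩))
  refine ⟨y, ⟨huIcc hy, hfy⟩, fun z ⟨hz, hfz⟩ => ?_⟩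
  refine (strictAntiOn_div_pow_of_sign_change hf hle hgt hk hck).injOn hz (huIcc hy) ?_
  simp [hfz, hfy]

end SignChange

/-- If `g : (0,∞) → ℝ` is given by a convergent power series
`g(y) = ∑_{j=n+1}^{n+l} a_j y^j - ∑_{j=n+l+1}^∞ a_j y^j` with all `a_j > 0` and
`l ≥ 1`, then `g` has exactly one zero in `(0,∞)`. -/
theorem stmt_17 (n l : ℕ) (hl : 1 ≤ l) (a : ℕ → ℝ) (ha : ∀ j, 0 < a j) (g : ℝ → ℝ)
    (hg : ∀ y : ℝ, 0 < y →
      HasSum (fun j : ℕ =>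
        (if j ≤ n then 0 else if j ≤ n + l then a j * y ^ j else -(a j * y ^ j))) (g y)) :
    ∃! y : ℝ, 0 < y ∧ g y = 0 := by
  set c : ℕ → ℝ := fun j => if j ≤ n then 0 else if j ≤ n + l then a j else -a j
  have hc : ∀ y, 0 < y → HasSum (fun j => c j * y ^ j) (g y) := fun y hy =>
    (hg y hy).congr_fun fun j => by simp only [c]; split_ifs <;> ring
  refine existsUnique_pos_root_of_sign_change (N := n + l) (i := n + l) (k := n + l + 1) hc
    (fun j _ => ?_) (fun j hj => ?_) le_rfl ?_ (by omega) ?_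
  · simp only [c]; split_ifs <;> linarith [ha j]
  · simp only [c]; rw [if_neg (by omega), if_neg (by omega)]; linarith [ha j]
  · simp only [c]; rw [if_neg (by omega), if_pos le_rfl]; exact ha _
  · simp only [c]; rw [if_neg (by omega), if_neg (by omega)]; linarith [ha (n + l + 1)]
end

section
/- For integers n ≥ 2 and 1 ≤ k ≤ n-1, the function h(x) = e^{2kx} ∑_{j=0}^n (-1)^{n-j}(n!/j!)(n+k)^{j-1}(n+k-j)x^j - ∑_{j=0}^n (-1)^{n-j}(n!/j!)(n-k)^{j-1}(n-k-j)x^j has exactly one nonzero real root c₁, and it satisfies -1 < c₁ < 0. -/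
/-!
Put `A = n + k`, `B = n - k` and `g(y) = e^{(A-B)y} P_B(y) - P_A(y)`, where `P_c(y) = ∑ q_c(j) y^j`
with `q_c(j) = (n!/j!) (c^j - j c^{j-1})`; then `h(x) = (-1)^{n+1} e^{2kx} g(-x)`.

Writing `E(u)` for `n!` times the degree-`n` Taylor polynomial of `exp`, one has
`P_c(y) = (1 - y) E(cy) + c^n y^{n+1}` and `E' = E - u^n`. This gives an integral representation
`e^{-Ay} g(y) = ∫₀^y t^n Ψ(y, t) dt` with an explicit `Ψ` that is positive for `y < t ≤ 0` and
near `(0, 0)`. Hence `g` has the sign of `(-1)^{n+1}` on `(-∞, 0)` and is positive just to the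
right of `0`, while `g(1) = B^n e^{2k} - A^n < 0` because `(1 - t) e^{2t} < 1 + t` for `t = k/n`;
so `g` has a root in `(0, 1)`.

It is the only positive root by Descartes' rule of signs for the Taylor series of `g`: its
coefficients vanish up to degree `n` (the binomial theorem, as `e^{(A-B)y} e^{By} = e^{Ay}`), and
from degree `n + 1` on, once a coefficient is `≤ 0` so is the next one.
-/

open Finset Real

open scoped Nat

lemma sum_pow_div_factorial_mul (a b : ℝ) (m : ℕ) :
    ∑ j ∈ range (m + 1), a ^ j / j ! * (b ^ (m - j) / (m - j) !) = (a + b) ^ m / m ! := by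
  rw [add_pow, sum_div]
  refine sum_congr rfl fun j hj => ?_
  rw [Nat.cast_choose ℝ (Nat.lt_succ_iff.1 (mem_range.1 hj))]
  field_simp

lemma hasSum_pow_mul_exp (j : ℕ) (W y : ℝ) :
    HasSum (fun m => (if j ≤ m then W ^ (m - j) / (m - j) ! else 0) * y ^ m)
      (y ^ j * exp (W * y)) := by
  rw [← hasSum_nat_add_iff' j, sum_eq_zero fun i hi => by
    rw [if_neg (by simpa using mem_range.1 hi), zero_mul], sub_zero]
  simp only [le_add_iff_nonneg_left, zero_le, if_true, Nat.add_sub_cancel]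
  have h := (NormedSpace.expSeries_div_hasSum_exp (W * y)).mul_left (y ^ j)
  rw [← Real.exp_eq_exp_ℝ] at h
  exact h.congr_fun fun i => by ring

lemma exists_sign_change_index {a : ℕ → ℝ} {N : ℕ} (hlow : ∀ m ≤ N, 0 ≤ a m)
    (hstep : ∀ m, N < m → a m ≤ 0 → a (m + 1) ≤ 0) (hneg : ∃ m, a m < 0) :
    ∃ M, (∀ m ≤ M, 0 ≤ a m) ∧ (∀ m, M < m → a m ≤ 0) ∧ a (M + 1) < 0 := by
  classical
  have hfind := Nat.find_spec hneg
  have hN : N < Nat.find hneg := by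
    by_contra! h
    exact hfind.not_ge (hlow _ h)
  have hafter : ∀ m, Nat.find hneg ≤ m → a m ≤ 0 := by
    intro m hm
    induction m, hm using Nat.le_induction with
    | base => exact hfind.le
    | succ m hm ih => exact hstep m (by omega) ih
  refine ⟨Nat.find hneg - 1, fun m hm => not_lt.1 (Nat.find_min hneg (by omega)),
    fun m hm => hafter m (by omega), ?_⟩
  rwa [Nat.sub_add_cancel (by omega)]

/-- Descartes' rule of signs for a power series with a single sign change. -/
lemma strictAntiOn_div_pow_of_hasSum {a : ℕ → ℝ} {f : ℝ → ℝ} {M : ℕ}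
    (hf : ∀ y, 0 < y → HasSum (fun m => a m * y ^ m) (f y)) (hle : ∀ m ≤ M, 0 ≤ a m)
    (hgt : ∀ m, M < m → a m ≤ 0) (hM : a (M + 1) < 0) :
    StrictAntiOn (fun y => f y / y ^ M) (Set.Ioi 0) := by
  intro y₁ (hy₁ : 0 < y₁) y₂ (hy₂ : 0 < y₂) h12
  have hs : ∀ y, 0 < y → HasSum (fun m => a m * (y ^ m / y ^ M)) (f y / y ^ M) := fun y hy =>
    ((hf y hy).div_const (y ^ M)).congr_fun fun m => (mul_div_assoc _ _ _).symm
  refine hasSum_lt (i := M + 1) (fun m => ?_) ?_ (hs y₂ hy₂) (hs y₁ hy₁)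
  · rcases le_or_gt m M with hm | hm
    · obtain ⟨d, rfl⟩ := Nat.exists_eq_add_of_le hm
      have key : ∀ y : ℝ, 0 < y → y ^ m / y ^ (m + d) = 1 / y ^ d := fun y hy => by
        rw [pow_add]; field_simp
      rw [key _ hy₁, key _ hy₂]
      exact mul_le_mul_of_nonneg_left (one_div_le_one_div_of_le (pow_pos hy₁ d)
        (pow_le_pow_left₀ hy₁.le h12.le d)) (hle _ hm)
    · obtain ⟨d, rfl⟩ := Nat.exists_eq_add_of_lt hm
      have key : ∀ y : ℝ, 0 < y → y ^ (M + d + 1) / y ^ M = y ^ (d + 1) := fun y hy => by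
        rw [add_assoc, pow_add]; field_simp
      rw [key _ hy₁, key _ hy₂]
      exact mul_le_mul_of_nonpos_left (pow_le_pow_left₀ hy₁.le h12.le _) (hgt _ hm)
  · have key : ∀ y : ℝ, 0 < y → y ^ (M + 1) / y ^ M = y := fun y hy => by
      rw [pow_succ]; field_simp
    rw [key _ hy₁, key _ hy₂]
    exact mul_lt_mul_of_neg_left h12 hM

lemma one_sub_mul_exp_two_mul_lt {t : ℝ} (ht0 : 0 < t) (ht1 : t < 1) :
    (1 - t) * exp (2 * t) < 1 + t := by
  have hlog : 2 * t < log (1 + t) - log (1 - t) := by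
    refine hasSum_lt (f := fun k => if k = 0 then 2 * t else 0) (i := 1) (fun k => ?_) ?_
      (hasSum_ite_eq 0 _) (hasSum_log_sub_log_of_abs_lt_one (abs_lt.2 ⟨by linarith, ht1⟩))
    · rcases eq_or_ne k 0 with rfl | hk
      · simp
      · simp only [if_neg hk]; positivity
    · simp only [one_ne_zero, if_false]; positivity
  rw [← log_div (by linarith) (by linarith), lt_log_iff_exp_lt (by apply div_pos <;> linarith),
    lt_div_iff₀ (by linarith)] at hlog
  linarith

lemma sub_pow_mul_exp_two_mul_lt (n : ℕ) {s : ℝ} (hs : 0 < s) (hsn : s < n) :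
    (n - s) ^ n * exp (2 * s) < (n + s) ^ n := by
  have hn : (0 : ℝ) < n := hs.trans hsn
  have key := one_sub_mul_exp_two_mul_lt (div_pos hs hn) ((div_lt_one hn).2 hsn)
  have hbase : (n - s) * exp (2 * (s / n)) < n + s := by
    have := mul_lt_mul_of_pos_left key hn
    rwa [← mul_assoc, mul_sub, mul_add, mul_one, mul_div_cancel₀ _ hn.ne'] at this
  have hpow := pow_lt_pow_left₀ hbase (by have := exp_pos (2 * (s / n)); nlinarith)
    (Nat.cast_pos.1 hn).ne'
  have hexp : exp (2 * (s / n)) ^ n = exp (2 * s) := by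
    rw [← exp_nat_mul]
    field_simp
  rwa [mul_pow, hexp] at hpow

lemma zpow_sub_one_mul_sub {c : ℝ} (hc : c ≠ 0) (j : ℕ) :
    c ^ ((j : ℤ) - 1) * (c - j) = c ^ j - j * c ^ (j - 1) := by
  cases j with
  | zero => simp [hc]
  | succ i =>
    simp only [Nat.cast_succ, add_sub_cancel_right, zpow_natCast, Nat.add_sub_cancel]
    ring

namespace ExpPolyRoot

/-- `n!` times the degree-`n` Taylor polynomial of `exp`. -/
noncomputable def E (n : ℕ) (u : ℝ) : ℝ := ∑ j ∈ range (n + 1), (n ! / j ! : ℝ) * u ^ j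

/-- The paper's coefficient `(n!/j!) c^{j-1} (c - j)`, written without negative powers
(see `zpow_sub_one_mul_sub`). -/
noncomputable def q (n : ℕ) (c : ℝ) (j : ℕ) : ℝ := (n ! / j ! : ℝ) * (c ^ j - j * c ^ (j - 1))

noncomputable def P (n : ℕ) (c y : ℝ) : ℝ := ∑ j ∈ range (n + 1), q n c j * y ^ j

noncomputable def g (n : ℕ) (A B y : ℝ) : ℝ := exp ((A - B) * y) * P n B y - P n A y

noncomputable def kernel (n : ℕ) (c y t : ℝ) : ℝ :=
  c ^ n * (c - (n + 1) + c * (t - y)) * exp (-(c * t))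

noncomputable def gCoeff (n : ℕ) (A B : ℝ) (m : ℕ) : ℝ :=
  ∑ j ∈ range (n + 1), q n B j * (if j ≤ m then (A - B) ^ (m - j) / (m - j) ! else 0) -
    if m ≤ n then q n A m else 0

lemma E_zero (n : ℕ) : E n 0 = n ! := by
  simp [E, Finset.sum_range_succ']

lemma sum_mul_pow_pred_eq_E_sub (n : ℕ) (u : ℝ) :
    ∑ j ∈ range (n + 1), (n ! / j ! : ℝ) * (j * u ^ (j - 1)) = E n u - u ^ n := by
  have hn : (n ! / n ! : ℝ) = 1 := div_self (by positivity)
  rw [sum_range_succ', E, sum_range_succ, hn]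
  simp only [CharP.cast_eq_zero, zero_mul, mul_zero, add_zero, one_mul, add_sub_cancel_right,
    Nat.add_sub_cancel]
  refine sum_congr rfl fun i _ => ?_
  rw [Nat.factorial_succ]
  push_cast
  field_simp

lemma hasDerivAt_E (n : ℕ) (u : ℝ) : HasDerivAt (E n) (E n u - u ^ n) u := by
  rw [← sum_mul_pow_pred_eq_E_sub]
  exact HasDerivAt.fun_sum fun j _ => (hasDerivAt_pow j u).const_mul _

lemma P_eq (n : ℕ) (c y : ℝ) : P n c y = (1 - y) * E n (c * y) + c ^ n * y ^ (n + 1) := by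
  have hP : P n c y = E n (c * y) -
      y * ∑ j ∈ range (n + 1), (n ! / j ! : ℝ) * (j * (c * y) ^ (j - 1)) := by
    rw [P, E, mul_sum, ← sum_sub_distrib]
    refine sum_congr rfl fun j _ => ?_
    cases j with
    | zero => simp [q]
    | succ i => simp only [q, Nat.cast_succ, Nat.add_sub_cancel]; ring
  rw [hP, sum_mul_pow_pred_eq_E_sub]
  ring

lemma P_one (n : ℕ) (c : ℝ) : P n c 1 = c ^ n := by
  simp [P_eq]

lemma integral_pow_mul_kernel (n : ℕ) (c y : ℝ) :
    ∫ t in (0 : ℝ)..y, t ^ n * kernel n c y t = (1 - y) * (n ! : ℝ) - exp (-(c * y)) * P n c y := by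
  have hF : ∀ t, HasDerivAt
      (fun t => -(exp (-(c * t)) * ((1 - y) * E n (c * t) + c ^ n * t ^ (n + 1))))
      (t ^ n * kernel n c y t) t := by
    intro t
    have hexp : HasDerivAt (fun t => exp (-(c * t))) (exp (-(c * t)) * -c) t := by
      simpa using ((hasDerivAt_id t).const_mul c).neg.exp
    have hE : HasDerivAt (fun t => E n (c * t)) ((E n (c * t) - (c * t) ^ n) * c) t := by
      simpa [Function.comp_def] using
        (hasDerivAt_E n (c * t)).comp t ((hasDerivAt_id t).const_mul c)
    refine (hexp.fun_mul ((hE.const_mul (1 - y)).fun_add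
      ((hasDerivAt_pow (n + 1) t).const_mul (c ^ n)))).fun_neg.congr_deriv ?_
    simp only [kernel, Nat.add_sub_cancel]
    push_cast
    ring
  rw [intervalIntegral.integral_eq_sub_of_hasDerivAt (fun t _ => hF t)
    (Continuous.intervalIntegrable (by unfold kernel; fun_prop) _ _), P_eq]
  simp only [mul_zero, neg_zero, exp_zero, E_zero, zero_pow (Nat.succ_ne_zero n), one_mul]
  ring

lemma g_eq_integral (n : ℕ) (A B y : ℝ) :
    g n A B y = exp (A * y) * ∫ t in (0 : ℝ)..y, t ^ n * (kernel n A y t - kernel n B y t) := by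
  have hint : ∀ c, IntervalIntegrable (fun t => t ^ n * kernel n c y t) MeasureTheory.volume 0 y :=
    fun c => Continuous.intervalIntegrable (by unfold kernel; fun_prop) _ _
  simp_rw [mul_sub]
  rw [intervalIntegral.integral_sub (hint A) (hint B), integral_pow_mul_kernel,
    integral_pow_mul_kernel, g]
  have hA : exp (A * y) * exp (-(A * y)) = 1 := by rw [← exp_add]; simp
  have hAB : exp ((A - B) * y) = exp (A * y) * exp (-(B * y)) := by rw [← exp_add]; ring_nf
  rw [hAB]
  linear_combination P n A y * hA

lemma g_one (n : ℕ) (A B : ℝ) : g n A B 1 = exp (A - B) * B ^ n - A ^ n := by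
  simp [g, P_one]

lemma continuous_g (n : ℕ) (A B : ℝ) : Continuous (g n A B) := by
  unfold g P
  fun_prop

variable {n : ℕ} {A B : ℝ}

lemma kernel_sub_pos (hB : 0 ≤ B) (hBA : B < A) (hA : n + 1 ≤ A) {y t : ℝ} (hyt : y < t)
    (ht : t ≤ 0) : 0 < kernel n A y t - kernel n B y t := by
  have hApos : 0 < A := by linarith
  have hbA : 0 < A - (n + 1) + A * (t - y) := by nlinarith
  have hb : B - (n + 1) + B * (t - y) < A - (n + 1) + A * (t - y) := by nlinarith
  have hexp : exp (-(B * t)) ≤ exp (-(A * t)) := exp_le_exp.2 (by nlinarith)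
  unfold kernel
  rw [sub_pos]
  rcases le_or_gt (B - (n + 1) + B * (t - y)) 0 with hb0 | hb0
  · calc B ^ n * (B - (n + 1) + B * (t - y)) * exp (-(B * t)) ≤ 0 :=
          mul_nonpos_of_nonpos_of_nonneg (mul_nonpos_of_nonneg_of_nonpos (by positivity) hb0)
            (exp_pos _).le
      _ < _ := by positivity
  · calc B ^ n * (B - (n + 1) + B * (t - y)) * exp (-(B * t))
        ≤ A ^ n * (B - (n + 1) + B * (t - y)) * exp (-(A * t)) := by gcongr
      _ < _ := by gcongr

lemma neg_one_pow_mul_g_pos (hB : 0 ≤ B) (hBA : B < A) (hA : n + 1 ≤ A) {y : ℝ} (hy : y < 0) :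
    0 < (-1) ^ (n + 1) * g n A B y := by
  have hI : 0 < ∫ t in y..0, (-1) ^ n * (t ^ n * (kernel n A y t - kernel n B y t)) := by
    refine intervalIntegral.intervalIntegral_pos_of_pos_on
      (Continuous.intervalIntegrable (by unfold kernel; fun_prop) _ _) (fun t ht => ?_) hy
    rw [← mul_assoc, ← mul_pow, neg_one_mul]
    exact mul_pos (pow_pos (neg_pos.2 ht.2) n) (kernel_sub_pos hB hBA hA ht.1 ht.2.le)
  rw [intervalIntegral.integral_const_mul] at hI
  rw [g_eq_integral, intervalIntegral.integral_symm]
  calc 0 < exp (A * y) * _ := mul_pos (exp_pos _) hI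
    _ = _ := by ring

lemma exists_g_pos (hB : 0 < B) (hBn : B < n + 1) (hA : n + 1 ≤ A) :
    ∃ y ∈ Set.Ioo (0 : ℝ) 1, 0 < g n A B y := by
  set Ψ : ℝ × ℝ → ℝ := fun p => kernel n A p.1 p.2 - kernel n B p.1 p.2
  have hΨ : Continuous Ψ := by simp only [Ψ, kernel]; fun_prop
  have hΨ0 : 0 < Ψ (0, 0) := by
    have h1 : 0 ≤ A ^ n * (A - (n + 1)) := mul_nonneg (pow_nonneg (by linarith) n) (by linarith)
    have h2 : 0 < B ^ n * (n + 1 - B) := mul_pos (pow_pos hB n) (by linarith)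
    simp only [Ψ, kernel, sub_self, mul_zero, add_zero, neg_zero, exp_zero, mul_one]
    linarith
  obtain ⟨ε, hε, hball⟩ :=
    Metric.eventually_nhds_iff.1 (continuousAt_const.eventually_lt hΨ.continuousAt hΨ0)
  set y := min (ε / 2) (1 / 2)
  have hy0 : 0 < y := by positivity
  have hyε : y < ε := (min_le_left _ _).trans_lt (by linarith)
  have hy1 : y < 1 := (min_le_right _ _).trans_lt (by norm_num)
  refine ⟨y, ⟨hy0, hy1⟩, ?_⟩
  rw [g_eq_integral]
  refine mul_pos (exp_pos _) (intervalIntegral.intervalIntegral_pos_of_pos_on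
    (Continuous.intervalIntegrable (by unfold kernel; fun_prop) _ _)
    (fun t ht => mul_pos (pow_pos ht.1 n) (hball (y := (y, t)) ?_)) hy0)
  rw [Prod.dist_eq, max_lt_iff]
  simp only [Real.dist_eq, sub_zero, abs_of_pos hy0, abs_of_pos ht.1]
  exact ⟨hyε, ht.2.trans hyε⟩

/-- Differentiate the identity `sum_pow_div_factorial_mul` with respect to `c`. -/
lemma sum_q_mul_pow_div_factorial (n m : ℕ) (c W : ℝ) :
    ∑ j ∈ range (m + 1), q n c j * (W ^ (m - j) / (m - j) !) = q n (c + W) m := by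
  have hfun : (fun c => ∑ j ∈ range (m + 1), c ^ j / j ! * (W ^ (m - j) / (m - j) !)) =
      fun c => (c + W) ^ m / m ! := funext fun c => sum_pow_div_factorial_mul c W m
  have hderiv : HasDerivAt
      (fun c => ∑ j ∈ range (m + 1), c ^ j / j ! * (W ^ (m - j) / (m - j) !))
      (∑ j ∈ range (m + 1), j * c ^ (j - 1) / j ! * (W ^ (m - j) / (m - j) !)) c :=
    HasDerivAt.fun_sum fun j _ => ((hasDerivAt_pow j c).div_const _).mul_const _
  rw [hfun] at hderiv
  have h := hderiv.unique (((hasDerivAt_id c).add_const W).pow m |>.div_const _)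
  have hsplit : ∑ j ∈ range (m + 1), q n c j * (W ^ (m - j) / (m - j) !) =
      n ! * (∑ j ∈ range (m + 1), c ^ j / j ! * (W ^ (m - j) / (m - j) !) -
        ∑ j ∈ range (m + 1), j * c ^ (j - 1) / j ! * (W ^ (m - j) / (m - j) !)) := by
    rw [← sum_sub_distrib, mul_sum]
    refine sum_congr rfl fun j _ => ?_
    simp only [q]
    ring
  rw [hsplit, h, sum_pow_div_factorial_mul, q]
  simp only [id_eq, mul_one]
  ring

lemma hasSum_gCoeff (n : ℕ) (A B y : ℝ) :
    HasSum (fun m => gCoeff n A B m * y ^ m) (g n A B y) := by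
  have hexp : HasSum (fun m => ∑ j ∈ range (n + 1),
      q n B j * ((if j ≤ m then (A - B) ^ (m - j) / (m - j) ! else 0) * y ^ m))
      (exp ((A - B) * y) * P n B y) := by
    have hval : exp ((A - B) * y) * P n B y =
        ∑ j ∈ range (n + 1), q n B j * (y ^ j * exp ((A - B) * y)) := by
      rw [P, mul_sum]
      exact sum_congr rfl fun j _ => by ring
    rw [hval]
    exact hasSum_sum fun j _ => (hasSum_pow_mul_exp j (A - B) y).mul_left (q n B j)
  have hpoly : HasSum (fun m => (if m ≤ n then q n A m else 0) * y ^ m) (P n A y) := by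
    have hval : P n A y = ∑ m ∈ range (n + 1), (if m ≤ n then q n A m else 0) * y ^ m :=
      sum_congr rfl fun m hm => by rw [if_pos (by simpa [Nat.lt_succ_iff] using hm)]
    rw [hval]
    exact hasSum_sum_of_ne_finset_zero fun m hm => by rw [if_neg (by simpa using hm), zero_mul]
  exact (hexp.sub hpoly).congr_fun fun m => by simp only [gCoeff, sub_mul, sum_mul, mul_assoc]

lemma gCoeff_eq_zero {m : ℕ} (hm : m ≤ n) : gCoeff n A B m = 0 := by
  rw [gCoeff, if_pos hm, sub_eq_zero, ← sum_subset (range_subset_range.2 (by omega : m + 1 ≤ n + 1))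
    fun j _ hj => by rw [if_neg (by simpa using hj), mul_zero]]
  rw [sum_congr rfl fun j hj => by rw [if_pos (by simpa [Nat.lt_succ_iff] using hj)],
    sum_q_mul_pow_div_factorial, add_sub_cancel]

lemma gCoeff_of_lt {m : ℕ} (hm : n < m) :
    gCoeff n A B m = ∑ j ∈ range (n + 1), q n B j * ((A - B) ^ (m - j) / (m - j) !) := by
  rw [gCoeff, if_neg (by omega), sub_zero]
  exact sum_congr rfl fun j hj => by rw [if_pos (by rw [mem_range] at hj; omega)]

lemma q_succ (n i : ℕ) (c : ℝ) : q n c (i + 1) = n ! / (i + 1) ! * (c ^ i * (c - (i + 1))) := by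
  simp only [q, Nat.add_sub_cancel]
  push_cast
  ring

lemma q_nonneg {c : ℝ} (hc : 0 ≤ c) {j : ℕ} (hj : j ≤ c) : 0 ≤ q n c j := by
  cases j with
  | zero => simp [q]
  | succ i =>
    rw [q_succ]
    push_cast at hj
    exact mul_nonneg (by positivity) (mul_nonneg (by positivity) (by linarith))

lemma q_nonpos {c : ℝ} (hc : 0 ≤ c) {j : ℕ} (hj : c < j) : q n c j ≤ 0 := by
  cases j with
  | zero => exact absurd hj (by simpa using hc)
  | succ i =>
    rw [q_succ]
    push_cast at hj
    exact mul_nonpos_of_nonneg_of_nonpos (by positivity)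
      (mul_nonpos_of_nonneg_of_nonpos (by positivity) (by linarith))

/-- Each term of `gCoeff (m + 1)` is the matching term of `gCoeff m` times `W / (m + 1 - j)`, and
the terms change sign once, at `j = B`; so `gCoeff (m + 1) ≤ W / (m + 1 - B) * gCoeff m`. -/
lemma gCoeff_succ_nonpos (hB : 0 ≤ B) (hBA : B ≤ A) (hBn : B < n + 1) {m : ℕ} (hm : n < m)
    (h : gCoeff n A B m ≤ 0) : gCoeff n A B (m + 1) ≤ 0 := by
  set W := A - B
  have hW : 0 ≤ W := sub_nonneg.2 hBA
  have hmB : 0 < (m + 1 : ℝ) - B := by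
    have : (n : ℝ) + 1 ≤ m := by exact_mod_cast hm
    linarith
  rw [gCoeff_of_lt hm] at h
  rw [gCoeff_of_lt (hm.trans m.lt_succ_self)]
  have hterm : ∀ j ∈ range (n + 1), q n B j * (W ^ (m + 1 - j) / (m + 1 - j) !) ≤
      W / ((m + 1 : ℝ) - B) * (q n B j * (W ^ (m - j) / (m - j) !)) := by
    intro j hj
    have hjm : j ≤ m := by rw [mem_range] at hj; omega
    have hjm' : (j : ℝ) ≤ m := by exact_mod_cast hjm
    have hstep : W ^ (m + 1 - j) / ((m + 1 - j) ! : ℝ) =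
        W / ((m + 1 : ℝ) - j) * (W ^ (m - j) / (m - j) !) := by
      rw [Nat.sub_add_comm hjm, pow_succ, Nat.factorial_succ]
      push_cast [Nat.cast_sub hjm]
      field_simp
      ring
    rw [hstep, mul_left_comm]
    have hX : 0 ≤ W ^ (m - j) / ((m - j) ! : ℝ) := by positivity
    rcases le_or_gt (j : ℝ) B with hjB | hjB
    · exact mul_le_mul_of_nonneg_right (div_le_div_of_nonneg_left hW hmB (by linarith))
        (mul_nonneg (q_nonneg hB hjB) hX)
    · exact mul_le_mul_of_nonpos_right (div_le_div_of_nonneg_left hW (by linarith) (by linarith))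
        (mul_nonpos_of_nonpos_of_nonneg (q_nonpos hB hjB) hX)
  calc _ ≤ ∑ j ∈ range (n + 1), W / ((m + 1 : ℝ) - B) * (q n B j * (W ^ (m - j) / (m - j) !)) :=
        sum_le_sum hterm
    _ ≤ 0 := by rw [← mul_sum]; exact mul_nonpos_of_nonneg_of_nonpos (by positivity) h

lemma eq_of_g_eq_zero (hB : 0 < B) (hBn : B < n + 1) (hA : n + 1 ≤ A)
    (hAB : B ^ n * exp (A - B) < A ^ n) {y₁ y₂ : ℝ} (h₁ : 0 < y₁) (h₂ : 0 < y₂)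
    (hg₁ : g n A B y₁ = 0) (hg₂ : g n A B y₂ = 0) : y₁ = y₂ := by
  have hneg : ∃ m, gCoeff n A B m < 0 := by
    by_contra! h
    have := (hasSum_gCoeff n A B 1).nonneg fun m => by simpa using h m
    rw [g_one] at this
    linarith
  obtain ⟨M, hle, hgt, hM⟩ := exists_sign_change_index (fun m hm => (gCoeff_eq_zero hm).ge)
    (fun m hm h => gCoeff_succ_nonpos hB.le (by linarith) hBn hm h) hneg
  exact (strictAntiOn_div_pow_of_hasSum (fun y _ => hasSum_gCoeff n A B y) hle hgt hM).injOn
    h₁ h₂ (by simp only [hg₁, hg₂, zero_div])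

theorem exists_root_g (hB : 0 < B) (hBn : B < n + 1) (hA : n + 1 ≤ A)
    (hAB : B ^ n * exp (A - B) < A ^ n) :
    ∃ y₀ ∈ Set.Ioo (0 : ℝ) 1, g n A B y₀ = 0 ∧ ∀ y ≠ 0, g n A B y = 0 → y = y₀ := by
  obtain ⟨y₁, ⟨hy₁0, hy₁1⟩, hgy₁⟩ := exists_g_pos hB hBn hA
  have hg1 : g n A B 1 < 0 := by rw [g_one]; linarith
  obtain ⟨y₀, hy₀, hgy₀⟩ := intermediate_value_Ioo' hy₁1.le (continuous_g n A B).continuousOn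
    ⟨hg1, hgy₁⟩
  refine ⟨y₀, ⟨hy₁0.trans hy₀.1, hy₀.2⟩, hgy₀, fun y hy0 hy => ?_⟩
  rcases hy0.lt_or_gt with hneg | hpos
  · have := neg_one_pow_mul_g_pos hB.le (by linarith) hA hneg
    rw [hy, mul_zero] at this
    exact absurd this (lt_irrefl 0)
  · exact eq_of_g_eq_zero hB hBn hA hAB hpos (hy₁0.trans hy₀.1) hy hgy₀

lemma sum_eq_neg_one_pow_mul_P (n : ℕ) {c : ℝ} (hc : c ≠ 0) (x : ℝ) :
    ∑ j ∈ range (n + 1), (-1 : ℝ) ^ (n - j) * ((n.factorial : ℝ) / (j.factorial : ℝ)) *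
      c ^ ((j : ℤ) - 1) * (c - j) * x ^ j = (-1) ^ n * P n c (-x) := by
  rw [P, mul_sum]
  refine sum_congr rfl fun j hj => ?_
  have hsign : (-1 : ℝ) ^ n = (-1) ^ (n - j) * (-1) ^ j := by
    rw [← pow_add, Nat.sub_add_cancel (by simpa [Nat.lt_succ_iff] using hj)]
  have hsq : (-1 : ℝ) ^ j * (-1) ^ j = 1 := by rw [← mul_pow]; norm_num
  rw [mul_assoc _ (c ^ _), zpow_sub_one_mul_sub hc, q, hsign, neg_pow x]
  linear_combination
    (-(-1 : ℝ) ^ (n - j) * (n ! / j ! : ℝ) * (c ^ j - j * c ^ (j - 1)) * x ^ j) * hsq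

end ExpPolyRoot

open ExpPolyRoot

theorem stmt_18_general (n k : ℕ) (hk1 : 1 ≤ k) (hk2 : k ≤ n - 1) (h : ℝ → ℝ)
    (hh : ∀ x : ℝ, h x =
      Real.exp (2 * k * x) *
        (∑ j ∈ Finset.range (n + 1),
          (-1 : ℝ) ^ (n - j) * ((n.factorial : ℝ) / (j.factorial : ℝ)) *
            ((n : ℝ) + k) ^ ((j : ℤ) - 1) * ((n : ℝ) + k - j) * x ^ j)
      - ∑ j ∈ Finset.range (n + 1),
          (-1 : ℝ) ^ (n - j) * ((n.factorial : ℝ) / (j.factorial : ℝ)) *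
            ((n : ℝ) - k) ^ ((j : ℤ) - 1) * ((n : ℝ) - k - j) * x ^ j) :
    ∃ c₁ : ℝ, (-1 < c₁ ∧ c₁ < 0) ∧ h c₁ = 0 ∧
      ∀ x : ℝ, x ≠ 0 → h x = 0 → x = c₁ := by
  have hk : (1 : ℝ) ≤ k := by exact_mod_cast hk1
  have hkn : (k : ℝ) + 1 ≤ n := by exact_mod_cast (by omega : k + 1 ≤ n)
  have hg : ∀ x, h x = (-1) ^ (n + 1) * exp (2 * k * x) * g n (n + k) (n - k) (-x) := by
    intro x
    have hexp : exp (2 * k * x) * exp (((n : ℝ) + k - (n - k)) * -x) = 1 := by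
      rw [← exp_add]; ring_nf; exact exp_zero
    rw [hh, sum_eq_neg_one_pow_mul_P n (by linarith) x, sum_eq_neg_one_pow_mul_P n (by linarith) x,
      g]
    linear_combination (-1) ^ n * P n (n - k) (-x) * hexp
  obtain ⟨y₀, ⟨hy₀0, hy₀1⟩, hgy₀, huniq⟩ := exists_root_g (n := n) (A := n + k) (B := n - k)
    (by linarith) (by linarith) (by linarith)
    (by convert sub_pow_mul_exp_two_mul_lt n (s := k) (by linarith) (by linarith) using 3; ring)
  refine ⟨-y₀, ⟨by linarith, by linarith⟩, by rw [hg, neg_neg, hgy₀, mul_zero], fun x hx hx0 => ?_⟩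
  rw [hg] at hx0
  have := huniq (-x) (neg_ne_zero.2 hx) (by simpa [exp_ne_zero] using hx0)
  linarith

/-- For `n ≥ 2`, `1 ≤ k ≤ n-1`, the function
`h x = e^{2kx} ∑_{j=0}^n (-1)^{n-j} (n!/j!) (n+k)^{j-1} (n+k-j) x^j
     - ∑_{j=0}^n (-1)^{n-j} (n!/j!) (n-k)^{j-1} (n-k-j) x^j`
has exactly one nonzero real root `c₁`, and `-1 < c₁ < 0`. -/
theorem stmt_18 (n k : ℕ) (hn : 2 ≤ n) (hk1 : 1 ≤ k) (hk2 : k ≤ n - 1) (h : ℝ → ℝ)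
    (hh : ∀ x : ℝ, h x =
      Real.exp (2 * k * x) *
        (∑ j ∈ Finset.range (n + 1),
          (-1 : ℝ) ^ (n - j) * ((n.factorial : ℝ) / (j.factorial : ℝ)) *
            ((n : ℝ) + k) ^ ((j : ℤ) - 1) * ((n : ℝ) + k - j) * x ^ j)
      - ∑ j ∈ Finset.range (n + 1),
          (-1 : ℝ) ^ (n - j) * ((n.factorial : ℝ) / (j.factorial : ℝ)) *
            ((n : ℝ) - k) ^ ((j : ℤ) - 1) * ((n : ℝ) - k - j) * x ^ j) :
    ∃ c₁ : ℝ, (-1 < c₁ ∧ c₁ < 0) ∧ h c₁ = 0 ∧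
      ∀ x : ℝ, x ≠ 0 → h x = 0 → x = c₁ :=
  stmt_18_general n k hk1 hk2 h hh
end
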